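/- arXiv:2401.16998 — 12 statements merged into one kernel-verified Lean document; each statement's English description precedes it below -/
import Mathlib

section
/- Let P be a doubly stochastic real matrix that is indecomposable (it cannot be written as a direct sum of two smaller matrices after simultaneously permuting rows and columns). If vectors a, b satisfy P·a = b and Pᵀ·b = a, then there exists a constant c such that a = b = c·𝟙 (the all-ones vector times c). -/
open Matrix BigOperators Finset

/-- A square real matrix is doubly stochastic if it has non-negative entries and
all rows and columns sum to 1. -/
def IsDoublyStochastic {V : Type*} [Fintype V] (M : Matrix V V ℝ) : Prop :=
  (∀ i j, 0 ≤ M i j) ∧ (∀ i, ∑ j, M i j = 1) ∧ (∀ j, ∑ i, M i j = 1)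

/-- A matrix is decomposable if there are non-trivial partitions (S, Sᶜ) of the rows
and (T, Tᶜ) of the columns so that all entries with row in one class and column in the
other class vanish. -/
def MatDecomposable {V W : Type*} (M : Matrix V W ℝ) : Prop :=
  ∃ (S : Set V) (T : Set W), S.Nonempty ∧ Sᶜ.Nonempty ∧ T.Nonempty ∧ Tᶜ.Nonempty ∧
    (∀ v ∈ S, ∀ w ∈ Tᶜ, M v w = 0) ∧ (∀ v ∈ Sᶜ, ∀ w ∈ T, M v w = 0)

theorem stmt0 {V : Type*} [Fintype V] (P : Matrix V V ℝ)
    (hP : IsDoublyStochastic P) (hind : ¬ MatDecomposable P)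
    (a b : V → ℝ) (h1 : P.mulVec a = b) (h2 : Pᵀ.mulVec b = a) :
    ∃ c : ℝ, a = Function.const V c ∧ b = Function.const V c := by
  classical
  obtain he | hne := isEmpty_or_nonempty V
  · exact ⟨0, funext fun v => (he.elim v), funext fun v => (he.elim v)⟩
  obtain ⟨hpos, hrow, hcol⟩ := hP
  have hU : (Finset.univ : Finset V).Nonempty := Finset.univ_nonempty
  set Ma := Finset.univ.sup' hU a with hMa
  set Mb := Finset.univ.sup' hU b with hMb
  have ha_le : ∀ j, a j ≤ Ma := fun j => Finset.le_sup' a (Finset.mem_univ j)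
  have hb_le : ∀ i, b i ≤ Mb := fun i => Finset.le_sup' b (Finset.mem_univ i)
  have hbval : ∀ i, b i = ∑ j, P i j * a j := by
    intro i; rw [← h1]; simp [Matrix.mulVec, dotProduct]
  have haval : ∀ j, a j = ∑ i, P i j * b i := by
    intro j; rw [← h2]; simp [Matrix.mulVec, dotProduct, Matrix.transpose_apply]
  have hbMa : ∀ i, b i ≤ Ma := by
    intro i
    calc b i = ∑ j, P i j * a j := hbval i
      _ ≤ ∑ j, P i j * Ma :=
        Finset.sum_le_sum fun j _ => mul_le_mul_of_nonneg_left (ha_le j) (hpos i j)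
      _ = Ma := by rw [← Finset.sum_mul, hrow i, one_mul]
  have haMb : ∀ j, a j ≤ Mb := by
    intro j
    calc a j = ∑ i, P i j * b i := haval j
      _ ≤ ∑ i, P i j * Mb :=
        Finset.sum_le_sum fun i _ => mul_le_mul_of_nonneg_left (hb_le i) (hpos i j)
      _ = Mb := by rw [← Finset.sum_mul, hcol j, one_mul]
  have hMab : Ma = Mb :=
    le_antisymm (Finset.sup'_le hU a fun j _ => haMb j)
      (Finset.sup'_le hU b fun i _ => hbMa i)
  set S : Set V := {j | a j = Ma} with hSdef
  set T : Set V := {i | b i = Ma} with hTdef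
  have hSne : S.Nonempty := by
    obtain ⟨j, _, hj⟩ := Finset.exists_mem_eq_sup' hU a
    exact ⟨j, hj.symm⟩
  have hTne : T.Nonempty := by
    obtain ⟨i, _, hi⟩ := Finset.exists_mem_eq_sup' hU b
    exact ⟨i, by simpa [hTdef, hMab] using hi.symm⟩
  -- key zero lemmas
  have key1 : ∀ i ∈ T, ∀ j ∈ Sᶜ, P i j = 0 := by
    intro i hi j hj
    have hsum : ∑ j, P i j * (Ma - a j) = 0 := by
      have : ∑ j, P i j * (Ma - a j) = Ma - b i := by
        simp [mul_sub, Finset.sum_sub_distrib, ← Finset.sum_mul, hrow i, hbval i]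
      rw [this, hi, sub_self]
    have hz := (Finset.sum_eq_zero_iff_of_nonneg (fun j _ =>
      mul_nonneg (hpos i j) (sub_nonneg.mpr (ha_le j)))).mp hsum j (Finset.mem_univ j)
    rcases mul_eq_zero.mp hz with h | h
    · exact h
    · exact absurd (by linarith [sub_eq_zero.mp h] : a j = Ma) hj
  have key2 : ∀ i ∈ Tᶜ, ∀ j ∈ S, P i j = 0 := by
    intro i hi j hj
    have hsum : ∑ i, P i j * (Ma - b i) = 0 := by
      have : ∑ i, P i j * (Ma - b i) = Ma - a j := by
        simp [mul_sub, Finset.sum_sub_distrib, ← Finset.sum_mul, hcol j, haval j]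
      rw [this, hj, sub_self]
    have hz := (Finset.sum_eq_zero_iff_of_nonneg (fun i _ =>
      mul_nonneg (hpos i j) (sub_nonneg.mpr (hMab ▸ hb_le i)))).mp hsum i (Finset.mem_univ i)
    rcases mul_eq_zero.mp hz with h | h
    · exact h
    · exact absurd (by linarith [sub_eq_zero.mp h] : b i = Ma) hi
  by_cases hTc : (Tᶜ : Set V).Nonempty
  · by_cases hSc : (Sᶜ : Set V).Nonempty
    · exact absurd ⟨T, S, hTne, hTc, hSne, hSc, key1, key2⟩ hind
    · -- Sᶜ empty: a ≡ Ma everywhere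
      have haM : ∀ j, a j = Ma := by
        intro j
        by_contra h
        exact hSc ⟨j, h⟩
      refine ⟨Ma, funext haM, funext fun i => ?_⟩
      calc b i = ∑ j, P i j * a j := hbval i
        _ = ∑ j, P i j * Ma := by simp_rw [fun j => haM j]
        _ = Ma := by rw [← Finset.sum_mul, hrow i, one_mul]
  · -- Tᶜ empty: b ≡ Ma everywhere
    have hbM : ∀ i, b i = Ma := by
      intro i
      by_contra h
      exact hTc ⟨i, h⟩
    refine ⟨Ma, funext fun j => ?_, funext hbM⟩
    calc a j = ∑ i, P i j * b i := haval j
      _ = ∑ i, P i j * Ma := by simp_rw [fun i => hbM i]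
      _ = Ma := by rw [← Finset.sum_mul, hcol j, one_mul]
end

section
/- Let P ∈ ℝ^{V×V} and Q ∈ ℝ^{W×W} be indecomposable doubly stochastic matrices, and let M₁, M₂ ∈ ℝ^{V×W} satisfy P·M₁ = M₂·Q and M₁·Qᵀ = Pᵀ·M₂. Then there exist constants c, d ∈ ℝ such that M₁·𝟙 = M₂·𝟙 = c·𝟙 and 𝟙ᵀ·M₁ = 𝟙ᵀ·M₂ = d·𝟙ᵀ. In particular, all row sums of M₁ and M₂ equal c and all column sums equal d. -/
open Matrix BigOperators Finset

lemma fixed_const {V : Type*} [Fintype V] [Nonempty V]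
    (P : Matrix V V ℝ) (hP : IsDoublyStochastic P) (hind : ¬ MatDecomposable P)
    (x y : V → ℝ) (hxy : ∀ v, y v = ∑ j, P v j * x j)
    (hyx : ∀ v, x v = ∑ j, P j v * y j) :
    ∃ m, (∀ v, x v = m) ∧ (∀ v, y v = m) := by
  obtain ⟨hnn, hrow, hcol⟩ := hP
  obtain ⟨v₀, -, hv₀⟩ := Finset.exists_max_image univ x univ_nonempty
  obtain ⟨w₀, -, hw₀⟩ := Finset.exists_max_image univ y univ_nonempty
  set m := x v₀ with hm
  -- y ≤ m
  have hy_le : ∀ v, y v ≤ m := by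
    intro v
    rw [hxy v]
    calc ∑ j, P v j * x j ≤ ∑ j, P v j * m := by
          apply Finset.sum_le_sum
          intro j _
          exact mul_le_mul_of_nonneg_left (hv₀ j (mem_univ j)) (hnn v j)
      _ = m := by rw [← Finset.sum_mul, hrow v, one_mul]
  have hx_le : ∀ v, x v ≤ y w₀ := by
    intro v
    rw [hyx v]
    calc ∑ j, P j v * y j ≤ ∑ j, P j v * y w₀ := by
          apply Finset.sum_le_sum
          intro j _
          exact mul_le_mul_of_nonneg_left (hw₀ j (mem_univ j)) (hnn j v)
      _ = y w₀ := by rw [← Finset.sum_mul, hcol v, one_mul]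
  have hmm : y w₀ = m := le_antisymm (hy_le w₀) (hx_le v₀)
  -- equality conditions
  have key1 : ∀ v, y v = m → ∀ j, P v j * x j = P v j * m := by
    intro v hv
    have hle : ∀ j ∈ univ, P v j * x j ≤ P v j * m := fun j _ =>
      mul_le_mul_of_nonneg_left (hv₀ j (mem_univ j)) (hnn v j)
    have hsum : ∑ j, P v j * x j = ∑ j, P v j * m := by
      rw [← hxy v, hv, ← Finset.sum_mul, hrow v, one_mul]
    intro j
    exact (Finset.sum_eq_sum_iff_of_le hle).mp hsum j (mem_univ j)
  have key2 : ∀ v, x v = m → ∀ j, P j v * y j = P j v * m := by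
    intro v hv
    have hle : ∀ j ∈ univ, P j v * y j ≤ P j v * m := fun j _ =>
      mul_le_mul_of_nonneg_left (hy_le j) (hnn j v)
    have hsum : ∑ j, P j v * y j = ∑ j, P j v * m := by
      rw [← hyx v, hv, ← Finset.sum_mul, hcol v, one_mul]
    intro j
    exact (Finset.sum_eq_sum_iff_of_le hle).mp hsum j (mem_univ j)
  by_cases hS : ∃ v, x v ≠ m
  · by_cases hS' : ∃ v, y v ≠ m
    · exfalso
      apply hind
      refine ⟨{v | y v = m}, {v | x v = m}, ⟨w₀, hmm⟩, ?_, ⟨v₀, rfl⟩, ?_, ?_, ?_⟩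
      · obtain ⟨v, hv⟩ := hS'; exact ⟨v, hv⟩
      · obtain ⟨v, hv⟩ := hS; exact ⟨v, hv⟩
      · intro v hv w hw
        have := key1 v hv w
        have hxw : x w ≠ m := hw
        have : P v w * (x w - m) = 0 := by ring_nf; linarith [this]
        rcases mul_eq_zero.mp this with h | h
        · exact h
        · exact absurd (by linarith : x w = m) hxw
      · intro v hv w hw
        have := key2 w hw v
        have hyv : y v ≠ m := hv
        have : P v w * (y v - m) = 0 := by ring_nf; linarith [this]
        rcases mul_eq_zero.mp this with h | h
        · exact h
        · exact absurd (by linarith : y v = m) hyv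
    · push_neg at hS'
      refine ⟨m, ?_, hS'⟩
      intro v
      rw [hyx v]
      calc ∑ j, P j v * y j = ∑ j, P j v * m := by
            apply Finset.sum_congr rfl; intro j _; rw [hS' j]
        _ = m := by rw [← Finset.sum_mul, hcol v, one_mul]
  · push_neg at hS
    refine ⟨m, hS, ?_⟩
    intro v
    rw [hxy v]
    calc ∑ j, P v j * x j = ∑ j, P v j * m := by
          apply Finset.sum_congr rfl; intro j _; rw [hS j]
      _ = m := by rw [← Finset.sum_mul, hrow v, one_mul]

theorem stmt1 {V W : Type*} [Fintype V] [Fintype W]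
    (P : Matrix V V ℝ) (Q : Matrix W W ℝ)
    (hP : IsDoublyStochastic P) (hPind : ¬ MatDecomposable P)
    (hQ : IsDoublyStochastic Q) (hQind : ¬ MatDecomposable Q)
    (M₁ M₂ : Matrix V W ℝ)
    (h1 : P * M₁ = M₂ * Q) (h2 : M₁ * Qᵀ = Pᵀ * M₂) :
    ∃ c d : ℝ,
      (∀ v, ∑ w, M₁ v w = c) ∧ (∀ v, ∑ w, M₂ v w = c) ∧
      (∀ w, ∑ v, M₁ v w = d) ∧ (∀ w, ∑ v, M₂ v w = d) := by
  have h1' : ∀ v w, ∑ j, P v j * M₁ j w = ∑ j, M₂ v j * Q j w := by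
    intro v w
    have := congrFun (congrFun h1 v) w
    simpa [Matrix.mul_apply] using this
  have h2' : ∀ v w, ∑ j, M₁ v j * Q w j = ∑ j, P j v * M₂ j w := by
    intro v w
    have := congrFun (congrFun h2 v) w
    simpa [Matrix.mul_apply, Matrix.transpose_apply] using this
  -- row sum relations
  have hr1 : ∀ v, (∑ w, M₂ v w) = ∑ j, P v j * (∑ w, M₁ j w) := by
    intro v
    calc ∑ w, M₂ v w = ∑ j, M₂ v j * ∑ w, Q j w := by
          simp [hQ.2.1]
      _ = ∑ w, ∑ j, M₂ v j * Q j w := by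
          rw [Finset.sum_comm]; simp [Finset.mul_sum]
      _ = ∑ w, ∑ j, P v j * M₁ j w := by
          simp_rw [h1']
      _ = ∑ j, P v j * (∑ w, M₁ j w) := by
          rw [Finset.sum_comm]; simp [Finset.mul_sum]
  have hr2 : ∀ v, (∑ w, M₁ v w) = ∑ j, P j v * (∑ w, M₂ j w) := by
    intro v
    calc ∑ w, M₁ v w = ∑ j, M₁ v j * ∑ w, Q w j := by
          simp [hQ.2.2]
      _ = ∑ w, ∑ j, M₁ v j * Q w j := by
          rw [Finset.sum_comm]; simp [Finset.mul_sum]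
      _ = ∑ w, ∑ j, P j v * M₂ j w := by
          simp_rw [h2']
      _ = ∑ j, P j v * (∑ w, M₂ j w) := by
          rw [Finset.sum_comm]; simp [Finset.mul_sum]
  -- column sum relations
  have hc1 : ∀ w, (∑ v, M₂ v w) = ∑ j, Q w j * (∑ v, M₁ v j) := by
    intro w
    calc ∑ v, M₂ v w = ∑ j, M₂ j w * ∑ v, P j v := by
          simp [hP.2.1]
      _ = ∑ v, ∑ j, P j v * M₂ j w := by
          rw [Finset.sum_comm]; simp [Finset.mul_sum, mul_comm]
      _ = ∑ v, ∑ j, M₁ v j * Q w j := by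
          simp_rw [h2']
      _ = ∑ j, Q w j * (∑ v, M₁ v j) := by
          rw [Finset.sum_comm]; simp [Finset.mul_sum, mul_comm]
  have hc2 : ∀ w, (∑ v, M₁ v w) = ∑ j, Q j w * (∑ v, M₂ v j) := by
    intro w
    calc ∑ v, M₁ v w = ∑ j, M₁ j w * ∑ v, P v j := by
          simp [hP.2.2]
      _ = ∑ v, ∑ j, P v j * M₁ j w := by
          rw [Finset.sum_comm]; simp [Finset.mul_sum, mul_comm]
      _ = ∑ v, ∑ j, M₂ v j * Q j w := by
          simp_rw [h1']
      _ = ∑ j, Q j w * (∑ v, M₂ v j) := by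
          rw [Finset.sum_comm]; simp [Finset.mul_sum, mul_comm]
  have hC : ∃ c : ℝ, (∀ v, ∑ w, M₁ v w = c) ∧ (∀ v, ∑ w, M₂ v w = c) := by
    rcases isEmpty_or_nonempty V with hV | hV
    · exact ⟨0, fun v => (hV.false v).elim, fun v => (hV.false v).elim⟩
    · obtain ⟨m, h₁, h₂⟩ := fixed_const P hP hPind
        (fun v => ∑ w, M₁ v w) (fun v => ∑ w, M₂ v w) hr1 hr2
      exact ⟨m, h₁, h₂⟩
  have hD : ∃ d : ℝ, (∀ w, ∑ v, M₁ v w = d) ∧ (∀ w, ∑ v, M₂ v w = d) := by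
    rcases isEmpty_or_nonempty W with hW | hW
    · exact ⟨0, fun w => (hW.false w).elim, fun w => (hW.false w).elim⟩
    · obtain ⟨m, h₁, h₂⟩ := fixed_const Q hQ hQind
        (fun w => ∑ v, M₁ v w) (fun w => ∑ v, M₂ v w) hc1 hc2
      exact ⟨m, h₁, h₂⟩
  obtain ⟨c, hc₁, hc₂⟩ := hC
  obtain ⟨d, hd₁, hd₂⟩ := hD
  exact ⟨c, d, hc₁, hc₂, hd₁, hd₂⟩
end

section
/- Let G and H be finite graphs on the same number of vertices with adjacency matrices N_G and N_H. If there exists a doubly stochastic matrix P with P·N_G = N_H·P, then G and H have a common equitable partition: there exist equitable partitions {P_i^G : i∈I} of V(G) and {P_i^H : i∈I} of V(H) with the same parameters c_{i,j} and with |P_i^G| = |P_i^H| for all i. -/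
open Matrix BigOperators Finset

/-- A (possibly rectangular) real matrix is doubly stochastic if it has non-negative
entries and all rows and columns sum to 1. -/
def IsDoublyStochasticRect {V W : Type*} [Fintype V] [Fintype W] (M : Matrix V W ℝ) : Prop :=
  (∀ v w, 0 ≤ M v w) ∧ (∀ v, ∑ w, M v w = 1) ∧ (∀ w, ∑ v, M v w = 1)

/-- A colouring `c : V → I` of the vertices of a graph `G` is an equitable partition
with parameters `par` if every vertex of colour `i` has exactly `par i j` neighbours
of colour `j`. -/
def IsEquitable {V I : Type*} [Fintype V] [DecidableEq V] [DecidableEq I]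
    (G : SimpleGraph V) [DecidableRel G.Adj] (c : V → I) (par : I → I → ℕ) : Prop :=
  ∀ (v : V) (j : I), ((G.neighborFinset v).filter (fun w => c w = j)).card = par (c v) j

lemma ds_fix_const {U : Type*} [Fintype U] (S : Matrix U U ℝ)
    (h0 : ∀ u u', 0 ≤ S u u') (hrow : ∀ u, ∑ u', S u u' = 1) (hcol : ∀ u', ∑ u, S u u' = 1)
    (y : U → ℝ) (hy : S.mulVec y = y) {u u' : U} (huu : S u u' ≠ 0) : y u = y u' := by
  have hmv : ∀ a, ∑ b, S a b * y b = y a := fun a => by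
    simpa [Matrix.mulVec, dotProduct] using congrFun hy a
  have hT : ∑ a, ∑ b, S a b * (y a - y b) ^ 2 = 0 := by
    have h1 : ∀ a, ∑ b, S a b * (y a - y b) ^ 2
        = (∑ b, S a b) * y a ^ 2 - (∑ b, S a b * y b) * (2 * y a) + ∑ b, S a b * y b ^ 2 := by
      intro a
      rw [Finset.sum_mul, Finset.sum_mul, ← Finset.sum_sub_distrib, ← Finset.sum_add_distrib]
      exact Finset.sum_congr rfl fun b _ => by ring
    have h2 : ∑ a, ∑ b, S a b * y b ^ 2 = ∑ b, y b ^ 2 := by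
      rw [Finset.sum_comm]
      exact Finset.sum_congr rfl fun b _ => by
        rw [← Finset.sum_mul, hcol b, one_mul]
    calc ∑ a, ∑ b, S a b * (y a - y b) ^ 2
        = ∑ a, ((∑ b, S a b) * y a ^ 2 - (∑ b, S a b * y b) * (2 * y a) + ∑ b, S a b * y b ^ 2) :=
          Finset.sum_congr rfl fun a _ => h1 a
      _ = ∑ a, (y a ^ 2 - 2 * (y a * y a)) + ∑ a, ∑ b, S a b * y b ^ 2 := by
          rw [← Finset.sum_add_distrib]
          exact Finset.sum_congr rfl fun a _ => by rw [hrow a, hmv a]; ring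
      _ = 0 := by
          rw [h2]
          have h3 : ∀ a : U, y a ^ 2 - 2 * (y a * y a) = -(y a ^ 2) := fun a => by ring
          simp only [h3, Finset.sum_neg_distrib]
          ring
  have hnn : ∀ a b : U, (0:ℝ) ≤ S a b * (y a - y b) ^ 2 :=
    fun a b => mul_nonneg (h0 a b) (sq_nonneg _)
  have h3 := (Finset.sum_eq_zero_iff_of_nonneg
    (fun a _ => Finset.sum_nonneg (fun b _ => hnn a b))).mp hT u (Finset.mem_univ u)
  have h4 := (Finset.sum_eq_zero_iff_of_nonneg
    (fun b _ => hnn u b)).mp h3 u' (Finset.mem_univ u')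
  have h5 := (mul_eq_zero.mp h4).resolve_left huu
  have h6 := sq_eq_zero_iff.mp h5
  linarith

theorem stmt3 {V W : Type*} [Fintype V] [Fintype W] [DecidableEq V] [DecidableEq W]
    (G : SimpleGraph V) (H : SimpleGraph W) [DecidableRel G.Adj] [DecidableRel H.Adj]
    (hcard : Fintype.card V = Fintype.card W)
    (P : Matrix W V ℝ) (hP : IsDoublyStochasticRect P)
    (hcomm : P * G.adjMatrix ℝ = H.adjMatrix ℝ * P) :
    ∃ (k : ℕ) (cG : V → Fin k) (cH : W → Fin k) (par : Fin k → Fin k → ℕ),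
      IsEquitable G cG par ∧ IsEquitable H cH par ∧
      ∀ i : Fin k,
        (Finset.univ.filter (fun v => cG v = i)).card =
          (Finset.univ.filter (fun w => cH w = i)).card := by
  classical
  obtain ⟨hP0, hProw, hPcol⟩ := hP
  set A : Matrix (V ⊕ W) (V ⊕ W) ℝ := Matrix.fromBlocks (G.adjMatrix ℝ) 0 0 (H.adjMatrix ℝ)
    with hA
  set S : Matrix (V ⊕ W) (V ⊕ W) ℝ := Matrix.fromBlocks 0 Pᵀ P 0 with hS
  have hS0 : ∀ u u', 0 ≤ S u u' := by
    rintro (v | w) (v' | w') <;> simp [hS, hP0]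
  have hSrow : ∀ u, ∑ u', S u u' = 1 := by
    rintro (v | w)
    · rw [Fintype.sum_sum_type]; simp [hS, hPcol v]
    · rw [Fintype.sum_sum_type]; simp [hS, hProw w]
  have hScol : ∀ u', ∑ u, S u u' = 1 := by
    rintro (v | w)
    · rw [Fintype.sum_sum_type]; simp [hS, hPcol v]
    · rw [Fintype.sum_sum_type]; simp [hS, hProw w]
  have htr : Pᵀ * H.adjMatrix ℝ = G.adjMatrix ℝ * Pᵀ := by
    have h := congrArg Matrix.transpose hcomm
    rw [Matrix.transpose_mul, Matrix.transpose_mul, SimpleGraph.transpose_adjMatrix,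
      SimpleGraph.transpose_adjMatrix] at h
    exact h.symm
  have hSA : S * A = A * S := by
    rw [hS, hA, Matrix.fromBlocks_multiply, Matrix.fromBlocks_multiply]
    simp [hcomm, htr]
  set r : (V ⊕ W) → (V ⊕ W) → Prop := fun u u' => S u u' ≠ 0 with hr
  set sd : Setoid (V ⊕ W) := Relation.EqvGen.setoid r with hsd
  letI : Fintype (Quotient sd) := Fintype.ofFinite _
  set k := Fintype.card (Quotient sd) with hk
  set e : Quotient sd ≃ Fin k := Fintype.equivFin (Quotient sd) with he
  set cG : V → Fin k := fun v => e (Quotient.mk sd (Sum.inl v)) with hcG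
  set cH : W → Fin k := fun w => e (Quotient.mk sd (Sum.inr w)) with hcH
  have hcG' : ∀ v, cG v = e (Quotient.mk sd (Sum.inl v)) := fun v => rfl
  have hcH' : ∀ w, cH w = e (Quotient.mk sd (Sum.inr w)) := fun w => rfl
  set x : Fin k → (V ⊕ W) → ℝ := fun j u => if e (Quotient.mk sd u) = j then 1 else 0 with hx
  have hxl : ∀ j v, x j (Sum.inl v) = if cG v = j then (1:ℝ) else 0 := fun j v => rfl
  have hxr : ∀ j w, x j (Sum.inr w) = if cH w = j then (1:ℝ) else 0 := fun j w => rfl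
  have hmk : ∀ u u' : V ⊕ W, S u u' ≠ 0 → Quotient.mk sd u = Quotient.mk sd u' :=
    fun u u' h => Quot.sound (Relation.EqvGen.rel u u' h)
  have hxfix : ∀ j, S.mulVec (x j) = x j := by
    intro j; funext u
    have hm : S.mulVec (x j) u = ∑ u', S u u' * x j u' := by
      simp [Matrix.mulVec, dotProduct]
    rw [hm]
    by_cases hu : e (Quotient.mk sd u) = j
    · have h1 : ∀ u', S u u' * x j u' = S u u' := by
        intro u'
        by_cases h : S u u' = 0
        · simp [h]
        · have hq := hmk u u' h
          simp only [hx]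
          rw [← hq, if_pos hu, mul_one]
      rw [Finset.sum_congr rfl fun u' _ => h1 u', hSrow u]
      simp only [hx]
      rw [if_pos hu]
    · have h1 : ∀ u', S u u' * x j u' = 0 := by
        intro u'
        by_cases h : S u u' = 0
        · simp [h]
        · have hq := hmk u u' h
          simp only [hx]
          rw [← hq, if_neg hu, mul_zero]
      rw [Finset.sum_eq_zero fun u' _ => h1 u']
      simp only [hx]
      rw [if_neg hu]
  set y : Fin k → (V ⊕ W) → ℝ := fun j => A.mulVec (x j) with hy
  have hyfix : ∀ j, S.mulVec (y j) = y j := by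
    intro j
    simp only [hy]
    rw [Matrix.mulVec_mulVec, hSA, ← Matrix.mulVec_mulVec, hxfix]
  have hconst : ∀ (j : Fin k) (u u' : V ⊕ W),
      Quotient.mk sd u = Quotient.mk sd u' → y j u = y j u' := by
    intro j u u' h
    have h2 : Relation.EqvGen r u u' := Quotient.exact h
    clear h
    induction h2 with
    | rel a b hab => exact ds_fix_const S hS0 hSrow hScol (y j) (hyfix j) hab
    | refl a => rfl
    | symm a b _ ih => exact ih.symm
    | trans a b c _ _ ih1 ih2 => exact ih1.trans ih2
  have hyG : ∀ j v, y j (Sum.inl v)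
      = (((G.neighborFinset v).filter (fun v' => cG v' = j)).card : ℝ) := by
    intro j v
    have hm : y j (Sum.inl v) = ∑ u', A (Sum.inl v) u' * x j u' := by
      simp [hy, Matrix.mulVec, dotProduct]
    rw [hm, Fintype.sum_sum_type]
    have h2 : ∀ w : W, A (Sum.inl v) (Sum.inr w) * x j (Sum.inr w) = 0 := by
      intro w; simp [hA]
    rw [Finset.sum_eq_zero fun w _ => h2 w, add_zero]
    have h3 : ∀ v' : V, A (Sum.inl v) (Sum.inl v') * x j (Sum.inl v')
        = if G.Adj v v' ∧ cG v' = j then (1:ℝ) else 0 := by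
      intro v'
      rw [hxl]
      simp only [hA, Matrix.fromBlocks_apply₁₁, SimpleGraph.adjMatrix_apply]
      by_cases h : G.Adj v v' <;> by_cases h' : cG v' = j <;> simp [h, h']
    rw [Finset.sum_congr rfl fun v' _ => h3 v', Finset.sum_boole]
    congr 2
    rw [SimpleGraph.neighborFinset_eq_filter, Finset.filter_filter]
  have hyH : ∀ j w, y j (Sum.inr w)
      = (((H.neighborFinset w).filter (fun w' => cH w' = j)).card : ℝ) := by
    intro j w
    have hm : y j (Sum.inr w) = ∑ u', A (Sum.inr w) u' * x j u' := by
      simp [hy, Matrix.mulVec, dotProduct]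
    rw [hm, Fintype.sum_sum_type]
    have h2 : ∀ v : V, A (Sum.inr w) (Sum.inl v) * x j (Sum.inl v) = 0 := by
      intro v; simp [hA]
    rw [Finset.sum_eq_zero fun v _ => h2 v, zero_add]
    have h3 : ∀ w' : W, A (Sum.inr w) (Sum.inr w') * x j (Sum.inr w')
        = if H.Adj w w' ∧ cH w' = j then (1:ℝ) else 0 := by
      intro w'
      rw [hxr]
      simp only [hA, Matrix.fromBlocks_apply₂₂, SimpleGraph.adjMatrix_apply]
      by_cases h : H.Adj w w' <;> by_cases h' : cH w' = j <;> simp [h, h']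
    rw [Finset.sum_congr rfl fun w' _ => h3 w', Finset.sum_boole]
    congr 2
    rw [SimpleGraph.neighborFinset_eq_filter, Finset.filter_filter]
  have hsize : ∀ j, ∑ v, x j (Sum.inl v) = ∑ w, x j (Sum.inr w) := by
    intro j
    have h1 : ∀ v, x j (Sum.inl v) = ∑ w, P w v * x j (Sum.inr w) := by
      intro v
      conv_lhs => rw [← hxfix j]
      have hm : S.mulVec (x j) (Sum.inl v) = ∑ u', S (Sum.inl v) u' * x j u' := by
        simp [Matrix.mulVec, dotProduct]
      rw [hm, Fintype.sum_sum_type]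
      have h2 : ∀ v' : V, S (Sum.inl v) (Sum.inl v') * x j (Sum.inl v') = 0 := by
        intro v'; simp [hS]
      rw [Finset.sum_eq_zero fun v' _ => h2 v', zero_add]
      exact Finset.sum_congr rfl fun w _ => by simp [hS]
    calc ∑ v, x j (Sum.inl v) = ∑ v, ∑ w, P w v * x j (Sum.inr w) :=
          Finset.sum_congr rfl fun v _ => h1 v
      _ = ∑ w, (∑ v, P w v) * x j (Sum.inr w) := by
          rw [Finset.sum_comm]
          exact Finset.sum_congr rfl fun w _ => (Finset.sum_mul _ _ _).symm
      _ = ∑ w, x j (Sum.inr w) := Finset.sum_congr rfl fun w _ => by rw [hProw w, one_mul]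
  have hsizecard : ∀ j : Fin k,
      (Finset.univ.filter (fun v => cG v = j)).card
        = (Finset.univ.filter (fun w => cH w = j)).card := by
    intro j
    have h := hsize j
    have hl : ∑ v, x j (Sum.inl v) = ((Finset.univ.filter (fun v => cG v = j)).card : ℝ) := by
      simp only [hxl]; rw [Finset.sum_boole]
    have hr' : ∑ w, x j (Sum.inr w) = ((Finset.univ.filter (fun w => cH w = j)).card : ℝ) := by
      simp only [hxr]; rw [Finset.sum_boole]
    rw [hl, hr'] at h
    exact_mod_cast h
  set par : Fin k → Fin k → ℕ := fun i j =>
    if h : ∃ v : V, cG v = i then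
      ((G.neighborFinset h.choose).filter (fun v' => cG v' = j)).card
    else if h' : ∃ w : W, cH w = i then
      ((H.neighborFinset h'.choose).filter (fun w' => cH w' = j)).card
    else 0 with hpar
  refine ⟨k, cG, cH, par, ?_, ?_, hsizecard⟩
  · intro v j
    simp only [hpar]
    have hex : ∃ v', cG v' = cG v := ⟨v, rfl⟩
    rw [dif_pos hex]
    have hq : Quotient.mk sd (Sum.inl hex.choose) = Quotient.mk sd (Sum.inl v) := by
      apply e.injective
      rw [← hcG' hex.choose, ← hcG' v]
      exact hex.choose_spec
    have h := hconst j _ _ hq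
    rw [hyG j hex.choose, hyG j v] at h
    exact_mod_cast h.symm
  · intro w j
    simp only [hpar]
    by_cases hex : ∃ v', cG v' = cH w
    · rw [dif_pos hex]
      have hq : Quotient.mk sd (Sum.inl hex.choose) = Quotient.mk sd (Sum.inr w) := by
        apply e.injective
        rw [← hcG' hex.choose, ← hcH' w]
        exact hex.choose_spec
      have h := hconst j _ _ hq
      rw [hyG j hex.choose, hyH j w] at h
      exact_mod_cast h.symm
    · rw [dif_neg hex]
      have hex' : ∃ w', cH w' = cH w := ⟨w, rfl⟩
      rw [dif_pos hex']
      have hq : Quotient.mk sd (Sum.inr hex'.choose) = Quotient.mk sd (Sum.inr w) := by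
        apply e.injective
        rw [← hcH' hex'.choose, ← hcH' w]
        exact hex'.choose_spec
      have h := hconst j _ _ hq
      rw [hyH j hex'.choose, hyH j w] at h
      exact_mod_cast h.symm
end

section
/- Let G and H be finite graphs with the same number of vertices. If G and H have a common equitable partition, then there exists a doubly stochastic matrix P such that P·N_G = N_H·P, where N_G and N_H are the adjacency matrices of G and H. Moreover, P can be taken as the block-diagonal matrix whose block corresponding to partition class i is (1/|P_i|)·J, the uniform matrix with all entries 1/|P_i|. -/
open Matrix BigOperators Finset

/-! The block matrix `P` is doubly stochastic because corresponding classes have equal sizes.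
For `w` of class `i` and `v` of class `j`, the entry `(P N_G)(w,v)` is `c_{j,i} / |P_i|` and
`(N_H P)(w,v)` is `c_{i,j} / |P_j|`; these agree since double counting the edges between
`P_i` and `P_j` gives `|P_i| c_{i,j} = |P_j| c_{j,i}`. -/

namespace IsEquitable

variable {V I : Type*} [Fintype V] [DecidableEq V] [DecidableEq I]
  {G : SimpleGraph V} [DecidableRel G.Adj] {c : V → I} {par : I → I → ℕ}

theorem card_neighborFinset_filter (h : IsEquitable G c par) (v : V) (j : I) :
    #{u | G.Adj v u ∧ c u = j} = par (c v) j := by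
  rw [← h v j, SimpleGraph.neighborFinset_eq_filter, filter_filter]

theorem card_mul_par_eq (h : IsEquitable G c par) (i j : I) :
    #{v | c v = i} * par i j = #{v | c v = j} * par j i := by
  refine card_mul_eq_card_mul G.Adj (fun v hv => ?_) (fun u hu => ?_)
  · rw [← (mem_filter.mp hv).2, ← h.card_neighborFinset_filter, bipartiteAbove, filter_filter]
    simp only [and_comm]
  · rw [← (mem_filter.mp hu).2, ← h.card_neighborFinset_filter, bipartiteBelow, filter_filter]
    simp only [and_comm, G.adj_comm]

theorem sum_adjMatrix_mul_ite {R : Type*} [NonAssocSemiring R] (h : IsEquitable G c par)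
    (v : V) (j : I) (a : R) :
    ∑ u, G.adjMatrix R v u * (if c u = j then a else 0) = par (c v) j * a := by
  simp only [SimpleGraph.adjMatrix_apply, ite_zero_mul_ite_zero, one_mul, sum_ite,
    sum_const_zero, add_zero, sum_const, nsmul_eq_mul, h.card_neighborFinset_filter]

theorem sum_ite_mul_adjMatrix {R : Type*} [NonAssocSemiring R] (h : IsEquitable G c par)
    (v : V) (j : I) (a : R) :
    ∑ u, (if c u = j then a else 0) * G.adjMatrix R u v = par (c v) j * a := by
  simp only [SimpleGraph.adjMatrix_apply, ite_zero_mul_ite_zero, mul_one, sum_ite,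
    sum_const_zero, add_zero, sum_const, nsmul_eq_mul, G.adj_comm _ v]
  rw [← h.card_neighborFinset_filter]
  simp only [and_comm]

end IsEquitable

theorem stmt4_general {V W I : Type*} [Fintype V] [Fintype W] [DecidableEq V] [DecidableEq W]
    [DecidableEq I]
    (G : SimpleGraph V) (H : SimpleGraph W) [DecidableRel G.Adj] [DecidableRel H.Adj]
    (cG : V → I) (cH : W → I) (par : I → I → ℕ)
    (hG : IsEquitable G cG par) (hH : IsEquitable H cH par)
    (hsize : ∀ i : I,
      (Finset.univ.filter (fun v => cG v = i)).card =
        (Finset.univ.filter (fun w => cH w = i)).card) :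
    ∃ P : Matrix W V ℝ,
      IsDoublyStochasticRect P ∧
      P * G.adjMatrix ℝ = H.adjMatrix ℝ * P ∧
      P = fun w v =>
        if cH w = cG v then
          1 / ((Finset.univ.filter (fun v' => cG v' = cG v)).card : ℝ)
        else 0 := by
  set n : I → ℝ := fun i => #{v | cG v = i}
  have hnG : ∀ v, n (cG v) ≠ 0 := fun v =>
    Nat.cast_ne_zero.mpr <| card_ne_zero.mpr ⟨v, mem_filter.mpr ⟨mem_univ v, rfl⟩⟩
  have hnH : ∀ w, n (cH w) ≠ 0 := fun w => by
    show ((#{v | cG v = cH w} : ℕ) : ℝ) ≠ 0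
    rw [hsize]
    exact Nat.cast_ne_zero.mpr <| card_ne_zero.mpr ⟨w, mem_filter.mpr ⟨mem_univ w, rfl⟩⟩
  have hP_row : ∀ w v, (if cH w = cG v then 1 / n (cG v) else 0) =
      if cG v = cH w then 1 / n (cH w) else 0 := by
    intro w v
    by_cases h : cH w = cG v
    · rw [if_pos h, if_pos h.symm, h]
    · rw [if_neg h, if_neg (Ne.symm h)]
  refine ⟨of fun w v => if cH w = cG v then 1 / n (cG v) else 0,
    ⟨fun w v => ?_, fun w => ?_, fun v => ?_⟩, ?_, rfl⟩
  · rw [of_apply]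
    split_ifs <;> positivity
  · simp only [of_apply, hP_row, sum_ite, sum_const_zero, add_zero, sum_const, nsmul_eq_mul]
    exact mul_one_div_cancel (hnH w)
  · simp only [of_apply, sum_ite, sum_const_zero, add_zero, sum_const, nsmul_eq_mul, ← hsize]
    exact mul_one_div_cancel (hnG v)
  · ext w v
    simp only [mul_apply, of_apply, hH.sum_adjMatrix_mul_ite]
    conv_lhs => simp only [hP_row, hG.sum_ite_mul_adjMatrix]
    rw [mul_one_div, mul_one_div, div_eq_div_iff (hnH w) (hnG v), mul_comm,
      mul_comm _ (n (cH w))]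
    simp only [n]
    exact_mod_cast hG.card_mul_par_eq (cG v) (cH w)

/-- If `G` and `H` have a common equitable partition (equitable partitions with the same
index set, the same parameters and corresponding classes of equal sizes), then there is a
doubly stochastic matrix `P` with `P·N_G = N_H·P`; moreover `P` can be taken to be the
block matrix whose entry at `(w,v)` is `1/|class of v|` if `v` and `w` are in corresponding
classes and `0` otherwise. -/
theorem stmt4 {V W I : Type*} [Fintype V] [Fintype W] [DecidableEq V] [DecidableEq W]
    [Fintype I] [DecidableEq I]
    (G : SimpleGraph V) (H : SimpleGraph W) [DecidableRel G.Adj] [DecidableRel H.Adj]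
    (cG : V → I) (cH : W → I) (par : I → I → ℕ)
    (hG : IsEquitable G cG par) (hH : IsEquitable H cH par)
    (hsize : ∀ i : I,
      (Finset.univ.filter (fun v => cG v = i)).card =
        (Finset.univ.filter (fun w => cH w = i)).card) :
    ∃ P : Matrix W V ℝ,
      IsDoublyStochasticRect P ∧
      P * G.adjMatrix ℝ = H.adjMatrix ℝ * P ∧
      P = fun w v =>
        if cH w = cG v then
          1 / ((Finset.univ.filter (fun v' => cG v' = cG v)).card : ℝ)
        else 0 :=
  stmt4_general G H cG cH par hG hH hsize
end

section
/- Let G and H be finite graphs. If G and H have a common equitable partition, then G and H have the same iterated degree sequence, i.e., they are not distinguished by colour refinement (1-dimensional Weisfeiler-Leman). -/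
/-!
Along an equitable partition with parameters `par`, the colour refinement colour of a vertex
after `n` rounds depends only on its class `i`: by induction it is `classColor par n i`, since
a vertex of class `i` has exactly `par i j` neighbours in class `j`. Hence the multiset of all
colours after `n` rounds consists of `|class i|` copies of `classColor par n i` for each `i`,
which is the same for two graphs sharing `par` and the class sizes.
-/

open Finset BigOperators

/-- The type of colours produced after `n` rounds of colour refinement. -/
def WLColor : ℕ → Type
  | 0 => Unit
  | n + 1 => WLColor n × Multiset (WLColor n)

/-- The colour refinement (1-dimensional Weisfeiler-Leman) colouring: `c₀` is constant
and `c_{n+1}(v) = (c_n(v), {{c_n(w) : w a neighbour of v}})`. -/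
def wlColoring {V : Type*} [Fintype V] [DecidableEq V] (G : SimpleGraph V)
    [DecidableRel G.Adj] : (n : ℕ) → V → WLColor n
  | 0, _ => ()
  | n + 1, v => (wlColoring G n v, (G.neighborFinset v).val.map (wlColoring G n))

theorem Multiset.map_comp_eq_sum_replicate {α β I : Type*} [Fintype I] [DecidableEq I]
    (f : I → β) (c : α → I) (m : Multiset α) :
    m.map (f ∘ c) = ∑ i, replicate (m.filter (c · = i)).card (f i) := by
  have hfibres : m.map c = ∑ i, replicate (m.filter (c · = i)).card i := by
    ext j
    simp [Multiset.count_map, Multiset.count_sum', Multiset.count_replicate, eq_comm]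
  rw [← Multiset.map_map, hfibres, ← Multiset.coe_mapAddMonoidHom, map_sum]
  simp only [Multiset.coe_mapAddMonoidHom, Multiset.map_replicate]

def classColor {I : Type*} [Fintype I] (par : I → I → ℕ) : (n : ℕ) → I → WLColor n
  | 0, _ => ()
  | n + 1, i => (classColor par n i, ∑ j, Multiset.replicate (par i j) (classColor par n j))

section

variable {V I : Type*} [Fintype V] [DecidableEq V] [Fintype I] [DecidableEq I]
  {G : SimpleGraph V} [DecidableRel G.Adj] {c : V → I} {par : I → I → ℕ}

theorem IsEquitable.wlColoring_eq (hc : IsEquitable G c par) :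
    ∀ n, wlColoring G n = classColor par n ∘ c
  | 0 => rfl
  | n + 1 => by
    funext v
    change (wlColoring G n v, (G.neighborFinset v).val.map (wlColoring G n)) =
      (classColor par n (c v), ∑ j, Multiset.replicate (par (c v) j) (classColor par n j))
    rw [hc.wlColoring_eq n, Multiset.map_comp_eq_sum_replicate]
    congr 1
    exact Finset.sum_congr rfl fun j _ => by rw [← hc v j]; rfl

theorem IsEquitable.map_wlColoring_univ (hc : IsEquitable G c par) (n : ℕ) :
    univ.val.map (wlColoring G n) =
      ∑ i, Multiset.replicate #{v | c v = i} (classColor par n i) := by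
  rw [hc.wlColoring_eq, Multiset.map_comp_eq_sum_replicate]
  rfl

end

/-- If two finite graphs have a common equitable partition then they have the same
iterated degree sequence, i.e. colour refinement does not distinguish them. -/
theorem stmt5 {V W : Type*} [Fintype V] [Fintype W] [DecidableEq V] [DecidableEq W]
    (G : SimpleGraph V) (H : SimpleGraph W) [DecidableRel G.Adj] [DecidableRel H.Adj]
    (hCEP : ∃ (k : ℕ) (cG : V → Fin k) (cH : W → Fin k) (par : Fin k → Fin k → ℕ),
      IsEquitable G cG par ∧ IsEquitable H cH par ∧
      ∀ i : Fin k,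
        (Finset.univ.filter (fun v => cG v = i)).card =
          (Finset.univ.filter (fun w => cH w = i)).card) :
    ∀ n : ℕ,
      Multiset.map (wlColoring G n) Finset.univ.val =
        Multiset.map (wlColoring H n) Finset.univ.val := by
  obtain ⟨k, cG, cH, par, hG, hH, hsizes⟩ := hCEP
  intro n
  rw [hG.map_wlColoring_univ, hH.map_wlColoring_univ]
  exact Finset.sum_congr rfl fun i _ => by rw [hsizes i]
end

section
/- Let G and H be finite graphs with the same iterated degree sequence (i.e., not distinguished by colour refinement). Then G and H have a common equitable partition, obtained from the stable colouring of the disjoint union G ⊔ H: the colour classes of the stable colouring restricted to G and to H form equitable partitions with the same parameters and equal corresponding class sizes. -/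
open Finset BigOperators

instance wlColorDecEq : ∀ n, DecidableEq (WLColor n)
  | 0 => inferInstanceAs (DecidableEq Unit)
  | n + 1 =>
      letI := wlColorDecEq n
      inferInstanceAs (DecidableEq (WLColor n × Multiset (WLColor n)))

/-! Each round of refinement can only split colour classes of `G`, of which there are at most
`|V|`, so some round `n ≤ |V|` splits none: `c_{n+1} = f ∘ c_n` on `G`. As `G` and `H` have the
same multiset of `c_{n+1}`-colours, the same `f` works on `H`, and the identity propagates to all
later rounds with a common refinement map. At such a round the colour of a vertex determines the
multiset of colours of its neighbours, which is equitability with parameters read off the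
refinement map; class sizes agree because the colour multisets do. -/

open Function

lemma Finset.card_filter_eq_count_map {α β : Type*} [DecidableEq β] (s : Finset α) (f : α → β)
    (b : β) : #(s.filter fun a => f a = b) = (s.val.map f).count b := by
  simp only [Multiset.count_map, eq_comm (a := b)]
  rfl

lemma Nat.exists_le_eq_succ_of_monotone_of_le {k : ℕ → ℕ} (hk : Monotone k) {B : ℕ}
    (hB : ∀ n, k n ≤ B) : ∃ n ≤ B, k n = k (n + 1) := by
  by_contra! hne
  have hgrow : ∀ n ≤ B + 1, n ≤ k n := by
    intro n
    induction n with
    | zero => simp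
    | succ m ih =>
      intro hm
      have := (hk (Nat.le_add_right m 1)).lt_of_ne (hne m (by omega))
      omega
  have := hgrow (B + 1) le_rfl
  have := hB (B + 1)
  omega

lemma isEquitable_of_map_neighbor_eq {V I : Type*} [Fintype V] [DecidableEq V] [DecidableEq I]
    (G : SimpleGraph V) [DecidableRel G.Adj] {c : V → I} (M : I → Multiset I)
    (hM : ∀ v, (G.neighborFinset v).val.map c = M (c v)) :
    IsEquitable G c fun i j => (M i).count j := fun v j => by
  rw [Finset.card_filter_eq_count_map, hM]

section WLColoring

variable {V : Type*} [Fintype V] [DecidableEq V] (G : SimpleGraph V) [DecidableRel G.Adj]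

def refineStep {n : ℕ} (f : WLColor n → WLColor (n + 1)) (x : WLColor (n + 1)) :
    WLColor (n + 2) :=
  (x, x.2.map f)

lemma wlColoring_succ_succ_eq_comp {n : ℕ} {f : WLColor n → WLColor (n + 1)}
    (hf : wlColoring G (n + 1) = f ∘ wlColoring G n) :
    wlColoring G (n + 2) = refineStep f ∘ wlColoring G (n + 1) := by
  funext v
  refine Prod.ext rfl ?_
  show (G.neighborFinset v).val.map (wlColoring G (n + 1)) =
    ((G.neighborFinset v).val.map (wlColoring G n)).map f
  rw [Multiset.map_map, hf]

lemma image_wlColoring_eq_image_fst (n : ℕ) :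
    univ.image (wlColoring G n) =
      (univ.image (wlColoring G (n + 1))).image fun x : WLColor (n + 1) => x.1 := by
  rw [Finset.image_image]
  rfl

lemma card_image_wlColoring_le_succ (n : ℕ) :
    #(univ.image (wlColoring G n)) ≤ #(univ.image (wlColoring G (n + 1))) := by
  rw [image_wlColoring_eq_image_fst]
  exact Finset.card_image_le

lemma factorsThrough_wlColoring_succ {n : ℕ}
    (h : #(univ.image (wlColoring G n)) = #(univ.image (wlColoring G (n + 1)))) :
    (wlColoring G (n + 1)).FactorsThrough (wlColoring G n) := by
  rw [image_wlColoring_eq_image_fst, Finset.card_image_iff] at h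
  intro v v' hvv'
  exact h (by simp) (by simp) hvv'

lemma exists_le_card_factorsThrough_wlColoring_succ :
    ∃ n ≤ Fintype.card V, (wlColoring G (n + 1)).FactorsThrough (wlColoring G n) := by
  obtain ⟨n, hn, h⟩ := Nat.exists_le_eq_succ_of_monotone_of_le
    (monotone_nat_of_le_succ (card_image_wlColoring_le_succ G)) fun n => card_image_le
  exact ⟨n, hn, factorsThrough_wlColoring_succ G h⟩

lemma isEquitable_wlColoring {n : ℕ} {f : WLColor n → WLColor (n + 1)}
    (hf : wlColoring G (n + 1) = f ∘ wlColoring G n) :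
    IsEquitable G (wlColoring G n) fun i j => (f i).2.count j :=
  isEquitable_of_map_neighbor_eq G (fun i => (f i).2) fun v => congrArg Prod.snd (congrFun hf v)

end WLColoring

section Pair

variable {V W : Type*} [Fintype V] [Fintype W] [DecidableEq V] [DecidableEq W]
  (G : SimpleGraph V) (H : SimpleGraph W) [DecidableRel G.Adj] [DecidableRel H.Adj]

lemma exists_wlColoring_succ_eq_comp_of_le {n m : ℕ} (hnm : n ≤ m)
    (h : ∃ f : WLColor n → WLColor (n + 1),
      wlColoring G (n + 1) = f ∘ wlColoring G n ∧ wlColoring H (n + 1) = f ∘ wlColoring H n) :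
    ∃ f : WLColor m → WLColor (m + 1),
      wlColoring G (m + 1) = f ∘ wlColoring G m ∧ wlColoring H (m + 1) = f ∘ wlColoring H m := by
  induction m, hnm using Nat.le_induction with
  | base => exact h
  | succ m _ ih =>
    obtain ⟨f, hG, hH⟩ := ih
    exact ⟨refineStep f, wlColoring_succ_succ_eq_comp G hG, wlColoring_succ_succ_eq_comp H hH⟩

lemma exists_le_card_wlColoring_succ_eq_comp
    (hIDS : ∀ n : ℕ, univ.val.map (wlColoring G n) = univ.val.map (wlColoring H n)) :
    ∃ n ≤ Fintype.card V, ∃ f : WLColor n → WLColor (n + 1),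
      wlColoring G (n + 1) = f ∘ wlColoring G n ∧ wlColoring H (n + 1) = f ∘ wlColoring H n := by
  obtain ⟨n, hn, hfactor⟩ := exists_le_card_factorsThrough_wlColoring_succ G
  set f := extend (wlColoring G n) (wlColoring G (n + 1)) fun x => (x, 0)
  have hfG : ∀ v, f (wlColoring G n v) = wlColoring G (n + 1) v := hfactor.extend_apply _
  refine ⟨n, hn, f, funext fun v => (hfG v).symm, funext fun w => ?_⟩
  obtain ⟨v, -, hv⟩ := Multiset.mem_map.1 <|
    (hIDS (n + 1)).symm ▸ Multiset.mem_map_of_mem (wlColoring H (n + 1)) (mem_univ_val w)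
  have hvw : wlColoring G n v = wlColoring H n w := congrArg Prod.fst hv
  rw [comp_apply, ← hvw, hfG, hv]

end Pair

/-- If two finite graphs have the same iterated degree sequence, then the stable
colour-refinement colouring (reached after at most `2(|V|+|W|)` rounds on the disjoint
union) yields equitable partitions of the two graphs with the same parameters and
corresponding classes of equal size, i.e. a common equitable partition. -/
theorem stmt6 {V W : Type*} [Fintype V] [Fintype W] [DecidableEq V] [DecidableEq W]
    (G : SimpleGraph V) (H : SimpleGraph W) [DecidableRel G.Adj] [DecidableRel H.Adj]
    (hIDS : ∀ n : ℕ,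
      Multiset.map (wlColoring G n) Finset.univ.val =
        Multiset.map (wlColoring H n) Finset.univ.val) :
    ∃ par : WLColor (2 * (Fintype.card V + Fintype.card W)) →
        WLColor (2 * (Fintype.card V + Fintype.card W)) → ℕ,
      IsEquitable G (wlColoring G (2 * (Fintype.card V + Fintype.card W))) par ∧
      IsEquitable H (wlColoring H (2 * (Fintype.card V + Fintype.card W))) par ∧
      ∀ i : WLColor (2 * (Fintype.card V + Fintype.card W)),
        (Finset.univ.filter
          (fun v => wlColoring G (2 * (Fintype.card V + Fintype.card W)) v = i)).card =
        (Finset.univ.filter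
          (fun w => wlColoring H (2 * (Fintype.card V + Fintype.card W)) w = i)).card := by
  obtain ⟨n, hn, hstable⟩ := exists_le_card_wlColoring_succ_eq_comp G H hIDS
  obtain ⟨f, hG, hH⟩ := exists_wlColoring_succ_eq_comp_of_le G H
    (m := 2 * (Fintype.card V + Fintype.card W)) (by omega) hstable
  refine ⟨_, isEquitable_wlColoring G hG, isEquitable_wlColoring H hH, fun i => ?_⟩
  rw [card_filter_eq_count_map, card_filter_eq_count_map, hIDS]
end

section
/- Let A and B be finite sets and let μ be a fractional homomorphism from a valued σ-structure 𝐀 (with universe A) to a valued σ-structure 𝐁 (with universe B). Then for every non-negative finite-valued σ-structure 𝐗, Opt(𝐗,𝐁) ≤ Opt(𝐗,𝐀). -/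
open Finset BigOperators

lemma myEReal_coe_sum {ι : Type*} (s : Finset ι) (g : ι → ℝ) :
    ((∑ i ∈ s, g i : ℝ) : EReal) = ∑ i ∈ s, ((g i : ℝ) : EReal) := by
  induction s using Finset.cons_induction with
  | empty => simp
  | cons a s hnm ih => rw [Finset.sum_cons, Finset.sum_cons, EReal.coe_add, ih]

lemma myEReal_mul_ne_bot {c : ℝ} (hc : 0 ≤ c) {x : EReal} (hx : x ≠ ⊥) :
    (c : EReal) * x ≠ ⊥ := by
  induction x with
  | bot => exact absurd rfl hx
  | coe r => rw [← EReal.coe_mul]; exact EReal.coe_ne_bot _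
  | top =>
    rcases eq_or_lt_of_le hc with h | h
    · rw [← h]; simp
    · rw [EReal.coe_mul_top_of_pos h]; exact top_ne_bot

lemma myEReal_distrib {c : ℝ} (hc : 0 ≤ c) {x y : EReal} (hx : x ≠ ⊥) (hy : y ≠ ⊥) :
    (c : EReal) * (x + y) = (c : EReal) * x + (c : EReal) * y := by
  rcases eq_or_lt_of_le hc with h | h
  · rw [← h]; simp
  · induction x with
    | bot => exact absurd rfl hx
    | top =>
      rw [EReal.top_add_of_ne_bot hy, EReal.coe_mul_top_of_pos h,
        EReal.top_add_of_ne_bot (myEReal_mul_ne_bot hc hy)]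
    | coe r =>
      induction y with
      | bot => exact absurd rfl hy
      | top =>
        rw [EReal.add_top_of_ne_bot (EReal.coe_ne_bot r), EReal.coe_mul_top_of_pos h,
          EReal.add_top_of_ne_bot (by rw [← EReal.coe_mul]; exact EReal.coe_ne_bot _)]
      | coe s =>
        rw [← EReal.coe_add, ← EReal.coe_mul, ← EReal.coe_mul, ← EReal.coe_mul, ← EReal.coe_add]
        norm_cast
        ring

lemma myEReal_sum_ne_bot {ι : Type*} (s : Finset ι) (g : ι → EReal)
    (hg : ∀ i ∈ s, g i ≠ ⊥) : ∑ i ∈ s, g i ≠ ⊥ := by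
  induction s using Finset.cons_induction with
  | empty => simp
  | cons a s hnm ih =>
    rw [Finset.sum_cons, Ne, EReal.add_eq_bot_iff]
    push_neg
    exact ⟨hg a (Finset.mem_cons_self a s),
      ih fun i hi => hg i (Finset.mem_cons_of_mem hi)⟩

lemma myEReal_mul_sum {ι : Type*} (s : Finset ι) {c : ℝ} (hc : 0 ≤ c) (g : ι → EReal)
    (hg : ∀ i ∈ s, g i ≠ ⊥) :
    (c : EReal) * ∑ i ∈ s, g i = ∑ i ∈ s, (c : EReal) * g i := by
  induction s using Finset.cons_induction with
  | empty => simp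
  | cons a s hnm ih =>
    rw [Finset.sum_cons, Finset.sum_cons,
      myEReal_distrib hc (hg a (Finset.mem_cons_self a s))
        (myEReal_sum_ne_bot s g fun i hi => hg i (Finset.mem_cons_of_mem hi)),
      ih fun i hi => hg i (Finset.mem_cons_of_mem hi)]

lemma myEReal_le_avg {ι : Type*} [Fintype ι] (μ : ι → ℚ) (hμ0 : ∀ f, 0 ≤ μ f)
    (hμ1 : ∑ f : ι, μ f = 1) (m : EReal) : m ≤ ∑ f : ι, ((μ f : ℝ) : EReal) * m := by
  induction m with
  | bot => exact bot_le
  | coe r =>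
    have h1 : ∑ f : ι, ((μ f : ℝ) : EReal) * (r : EReal)
        = ((∑ f : ι, (μ f : ℝ) * r : ℝ) : EReal) := by
      rw [myEReal_coe_sum]
      exact Finset.sum_congr rfl fun f _ => (EReal.coe_mul _ _).symm
    have h2 : (∑ f : ι, (μ f : ℝ)) = 1 := by exact_mod_cast hμ1
    rw [h1, ← Finset.sum_mul, h2, one_mul]
  | top =>
    have hne : ∃ f : ι, μ f ≠ 0 := by
      by_contra hcon
      push_neg at hcon
      simp [hcon] at hμ1
    obtain ⟨f₀, hf₀⟩ := hne
    have hpos : (0 : ℝ) < (μ f₀ : ℝ) := by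
      exact_mod_cast lt_of_le_of_ne (hμ0 f₀) (Ne.symm hf₀)
    calc (⊤ : EReal) = ((μ f₀ : ℝ) : EReal) * ⊤ := (EReal.coe_mul_top_of_pos hpos).symm
      _ ≤ ∑ f : ι, ((μ f : ℝ) : EReal) * ⊤ := by
          refine Finset.single_le_sum (f := fun f => ((μ f : ℝ) : EReal) * ⊤)
            (fun f _ => ?_) (Finset.mem_univ f₀)
          show (0 : EReal) ≤ ((μ f : ℝ) : EReal) * ⊤
          rcases eq_or_lt_of_le (hμ0 f) with h | h
          · rw [show ((μ f : ℝ) : EReal) = 0 by exact_mod_cast h.symm, zero_mul]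
          · rw [EReal.coe_mul_top_of_pos (by exact_mod_cast h)]
            exact le_top

variable {σ : Type} [Fintype σ]

/-- The value of an assignment `h : X → A` for a non-negative finite-valued input
structure with weights `wX` and a template valued structure with costs `cA`
(costs live in `EReal`, where `⊤` plays the role of `∞` and `0 * ⊤ = 0`). -/
noncomputable def VCSPVal (ar : σ → ℕ) {X A : Type} [Fintype X]
    (wX : ∀ R : σ, (Fin (ar R) → X) → ℚ)
    (cA : ∀ R : σ, (Fin (ar R) → A) → EReal) (h : X → A) : EReal :=
  ∑ R : σ, ∑ x : Fin (ar R) → X, ((wX R x : ℝ) : EReal) * cA R (fun i => h (x i))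

/-- The optimum value `Opt(𝐗,𝐀)`, the minimum of `Val(𝐗,𝐀,h)` over all maps `h : X → A`. -/
noncomputable def VCSPOpt (ar : σ → ℕ) {X A : Type} [Fintype X]
    (wX : ∀ R : σ, (Fin (ar R) → X) → ℚ)
    (cA : ∀ R : σ, (Fin (ar R) → A) → EReal) : EReal :=
  ⨅ h : X → A, VCSPVal ar wX cA h

/-- A valued structure takes values in `ℚ ∪ {∞}`: each cost is either a rational or `⊤`. -/
def QInftyValued (ar : σ → ℕ) {A : Type}
    (cA : ∀ R : σ, (Fin (ar R) → A) → EReal) : Prop :=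
  ∀ (R : σ) (t : Fin (ar R) → A), (∃ q : ℚ, cA R t = ((q : ℝ) : EReal)) ∨ cA R t = ⊤

/-- A fractional homomorphism from the valued structure `cA` to `cB`: a probability
distribution `μ` on functions `A → B` such that for every symbol `R` and tuple `a`,
`Σ_f μ(f)·R^𝐁(f(a)) ≤ R^𝐀(a)`. -/
def IsFractionalHom (ar : σ → ℕ) {A B : Type} [Fintype A] [DecidableEq A] [Fintype B]
    (cA : ∀ R : σ, (Fin (ar R) → A) → EReal)
    (cB : ∀ R : σ, (Fin (ar R) → B) → EReal)
    (μ : (A → B) → ℚ) : Prop :=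
  (∀ f, 0 ≤ μ f) ∧ (∑ f : A → B, μ f = 1) ∧
  ∀ (R : σ) (a : Fin (ar R) → A),
    ∑ f : A → B, ((μ f : ℝ) : EReal) * cB R (fun i => f (a i)) ≤ cA R a

/-- If there is a fractional homomorphism from `𝐀` to `𝐁`, then for every non-negative
finite-valued input structure `𝐗`, `Opt(𝐗,𝐁) ≤ Opt(𝐗,𝐀)`. -/
theorem stmt7 (ar : σ → ℕ) {A B X : Type} [Fintype A] [DecidableEq A] [Fintype B]
    [Nonempty A] [Nonempty B] [Fintype X]
    (cA : ∀ R : σ, (Fin (ar R) → A) → EReal)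
    (cB : ∀ R : σ, (Fin (ar R) → B) → EReal)
    (hA : QInftyValued ar cA) (hB : QInftyValued ar cB)
    (μ : (A → B) → ℚ) (hμ : IsFractionalHom ar cA cB μ)
    (wX : ∀ R : σ, (Fin (ar R) → X) → ℚ) (hwX : ∀ R x, 0 ≤ wX R x) :
    VCSPOpt ar wX cB ≤ VCSPOpt ar wX cA := by
  obtain ⟨hμ0, hμ1, hμ2⟩ := hμ
  have hwE : ∀ R x, (0:ℝ) ≤ ((wX R x : ℝ)) := fun R x => by exact_mod_cast hwX R x
  have hμE : ∀ f, (0:ℝ) ≤ ((μ f : ℝ)) := fun f => by exact_mod_cast hμ0 f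
  have hBne : ∀ (R : σ) (t : Fin (ar R) → B), cB R t ≠ ⊥ := by
    intro R t
    rcases hB R t with ⟨q, hq⟩ | hq
    · rw [hq]; exact EReal.coe_ne_bot _
    · rw [hq]; exact top_ne_bot
  have htermne : ∀ (R : σ) (x : Fin (ar R) → X) (g : X → B),
      ((wX R x : ℝ) : EReal) * cB R (fun i => g (x i)) ≠ ⊥ :=
    fun R x g => myEReal_mul_ne_bot (hwE R x) (hBne R _)
  refine le_iInf fun h => ?_
  have key : ∑ f : A → B, ((μ f : ℝ) : EReal) * VCSPVal ar wX cB (fun t => f (h t))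
      ≤ VCSPVal ar wX cA h := by
    have expand : ∀ f : A → B, ((μ f : ℝ) : EReal) * VCSPVal ar wX cB (fun t => f (h t))
        = ∑ R : σ, ∑ x : Fin (ar R) → X,
            ((μ f : ℝ) : EReal) * (((wX R x : ℝ) : EReal) * cB R (fun i => f (h (x i)))) := by
      intro f
      rw [VCSPVal, myEReal_mul_sum _ (hμE f) _ (fun R _ =>
        myEReal_sum_ne_bot _ _ fun x _ => htermne R x (fun t => f (h t)))]
      exact Finset.sum_congr rfl fun R _ =>
        myEReal_mul_sum _ (hμE f) _ (fun x _ => htermne R x (fun t => f (h t)))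
    calc ∑ f : A → B, ((μ f : ℝ) : EReal) * VCSPVal ar wX cB (fun t => f (h t))
        = ∑ f : A → B, ∑ R : σ, ∑ x : Fin (ar R) → X,
            ((μ f : ℝ) : EReal) * (((wX R x : ℝ) : EReal) * cB R (fun i => f (h (x i)))) :=
          Finset.sum_congr rfl fun f _ => expand f
      _ = ∑ R : σ, ∑ x : Fin (ar R) → X, ∑ f : A → B,
            ((μ f : ℝ) : EReal) * (((wX R x : ℝ) : EReal) * cB R (fun i => f (h (x i)))) := by
          rw [Finset.sum_comm]
          exact Finset.sum_congr rfl fun R _ => Finset.sum_comm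
      _ ≤ ∑ R : σ, ∑ x : Fin (ar R) → X,
            ((wX R x : ℝ) : EReal) * cA R (fun i => h (x i)) := by
          refine Finset.sum_le_sum fun R _ => Finset.sum_le_sum fun x _ => ?_
          have step1 : ∑ f : A → B,
                ((μ f : ℝ) : EReal) * (((wX R x : ℝ) : EReal) * cB R (fun i => f (h (x i))))
              = ((wX R x : ℝ) : EReal)
                * ∑ f : A → B, ((μ f : ℝ) : EReal) * cB R (fun i => f (h (x i))) := by
            rw [myEReal_mul_sum _ (hwE R x) _
              (fun f _ => myEReal_mul_ne_bot (hμE f) (hBne R _))]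
            exact Finset.sum_congr rfl fun f _ => mul_left_comm _ _ _
          rw [step1]
          exact mul_le_mul_of_nonneg_left (hμ2 R (fun i => h (x i)))
            (by exact_mod_cast hwE R x)
      _ = VCSPVal ar wX cA h := rfl
  refine le_trans ?_ key
  refine le_trans (myEReal_le_avg μ hμ0 hμ1 _) (Finset.sum_le_sum fun f _ => ?_)
  exact mul_le_mul_of_nonneg_left (iInf_le _ (fun t => f (h t))) (by exact_mod_cast hμ0 f)
end

section
/- Let 𝐀 and 𝐁 be valued σ-structures over finite universes such that for every non-negative finite-valued σ-structure 𝐗, Opt(𝐗,𝐁) ≤ Opt(𝐗,𝐀). Then there exists a fractional homomorphism from 𝐀 to 𝐁, i.e., a probability distribution μ on functions f : A → B with Σ_f μ(f)·R^𝐁(f(a)) ≤ R^𝐀(a) for every symbol R and tuple a. -/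
open Finset BigOperators

variable {σ : Type} [Fintype σ]

/-!
Let `J` be the tuples of `𝐀` of finite cost and `S` the maps `f : A → B` sending every tuple of
`J` to a tuple of finite cost. Gordan's alternative for the rational matrix
`M f j = R^𝐁(f(j)) - R^𝐀(j)` (`f ∈ S`, `j ∈ J`) gives either a distribution `μ` on `S` with
`Σ_f μ(f) M f j ≤ 0` for all `j`, which is a fractional homomorphism, or weights `w > 0` on `J`
with `Σ_j w(j) M f j > 0` for all `f ∈ S`. In the second case the input `𝐗` on `A` with weights
`w` has `Opt(𝐗,𝐀) ≤ Val(𝐗,𝐀,id) < Val(𝐗,𝐁,f)` for every `f`: for `f ∈ S` by the choice of `w`,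
and for `f ∉ S` because `w > 0` makes `Val(𝐗,𝐁,f) = ∞`.

The alternative holds over `ℝ` by separating the image of the simplex from the nonnegative
orthant. It descends to `ℚ` because, by Fourier–Motzkin elimination, a system of linear
inequalities with rational coefficients is solvable in one ordered field iff it is in any other.
-/

section LinearSystems

variable {ι V : Type*} [Fintype V]

def SolvableOver (K : Type*) [Field K] [LinearOrder K] (a : ι → V → ℚ) (b : ι → ℚ) :
    Prop :=
  ∃ x : V → K, ∀ i, ∑ v, (a i v : K) * x v ≤ b i

lemma exists_forall_le_and_forall_le {α κ : Type*} [LinearOrder α] [Nonempty α] [Fintype ι]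
    [Fintype κ] (l : ι → α) (u : κ → α) (h : ∀ i k, l i ≤ u k) :
    ∃ t, (∀ i, l i ≤ t) ∧ ∀ k, t ≤ u k := by
  cases isEmpty_or_nonempty ι with
  | inr _ => exact ⟨univ.sup' univ_nonempty l, fun i => le_sup' l (mem_univ i),
      fun k => sup'_le _ _ fun i _ => h i k⟩
  | inl _ =>
    cases isEmpty_or_nonempty κ with
    | inr _ => exact ⟨univ.inf' univ_nonempty u, fun i => isEmptyElim i,
        fun k => inf'_le u (mem_univ k)⟩
    | inl _ => exact ⟨Classical.arbitrary α, fun i => isEmptyElim i, fun k => isEmptyElim k⟩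

variable {K L : Type*} [Field K] [LinearOrder K] [IsStrictOrderedRing K]
  [Field L] [LinearOrder L] [IsStrictOrderedRing L]

abbrev FourierMotzkinRows (c : ι → ℚ) : Type _ :=
  {p // 0 < c p} × {q // c q < 0} ⊕ {i // c i = 0}

section Elimination

variable {n : ℕ} (a : ι → Fin (n + 1) → ℚ) (b : ι → ℚ)

/-- Elimination of the variable `x 0`: each row with a positive coefficient of `x 0` is combined
with each row with a negative one so that `x 0` cancels; rows without `x 0` are kept. -/
def fourierMotzkinCoeff : FourierMotzkinRows (fun i => a i 0) → Fin n → ℚ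
  | .inl (p, q), v => a p 0 * a q v.succ - a q 0 * a p v.succ
  | .inr i, v => a i v.succ

def fourierMotzkinBound : FourierMotzkinRows (fun i => a i 0) → ℚ
  | .inl (p, q) => a p 0 * b q - a q 0 * b p
  | .inr i => b i

omit [LinearOrder K] [IsStrictOrderedRing K] in
lemma sum_mul_cons (t : K) (y : Fin n → K) (i : ι) :
    ∑ v, (a i v : K) * (Fin.cons t y : Fin (n + 1) → K) v =
      a i 0 * t + ∑ v : Fin n, (a i v.succ : K) * y v := by
  simp [Fin.sum_univ_succ]

lemma sum_fourierMotzkinCoeff_mul (y : Fin n → K) (p : {p // 0 < a p 0})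
    (q : {q // a q 0 < 0}) :
    ∑ v, (fourierMotzkinCoeff a (.inl (p, q)) v : K) * y v =
      a p.1 0 * ∑ v : Fin n, (a q.1 v.succ : K) * y v -
        a q.1 0 * ∑ v : Fin n, (a p.1 v.succ : K) * y v := by
  simp only [fourierMotzkinCoeff, Rat.cast_sub, Rat.cast_mul, sub_mul, sum_sub_distrib, mul_sum,
    mul_assoc]

variable {a b}

lemma SolvableOver.fourierMotzkin [Fintype ι] (h : SolvableOver K a b) :
    SolvableOver K (fourierMotzkinCoeff a) (fourierMotzkinBound a b) := by
  obtain ⟨x, hx⟩ := h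
  rw [← Fin.cons_self_tail x] at hx
  simp only [sum_mul_cons] at hx
  refine ⟨Fin.tail x, ?_⟩
  rintro (⟨p, q⟩ | i)
  · have hp : (0 : K) < a p.1 0 := Rat.cast_pos.2 p.2
    have hq : (a q.1 0 : K) < 0 := Rat.cast_lt_zero.2 q.2
    have := hx p.1
    have := hx q.1
    rw [sum_fourierMotzkinCoeff_mul]
    simp only [fourierMotzkinBound, Rat.cast_sub, Rat.cast_mul]
    nlinarith
  · simpa [fourierMotzkinCoeff, fourierMotzkinBound, i.2] using hx i.1

lemma SolvableOver.of_fourierMotzkin [Fintype ι]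
    (h : SolvableOver K (fourierMotzkinCoeff a) (fourierMotzkinBound a b)) :
    SolvableOver K a b := by
  obtain ⟨y, hy⟩ := h
  set T : ι → K := fun i => ∑ v : Fin n, (a i v.succ : K) * y v
  obtain ⟨t, hlow, hupp⟩ := exists_forall_le_and_forall_le
      (fun q : {q // a q 0 < 0} => (T q - b q) / -(a q.1 0 : K))
      (fun p : {p // 0 < a p 0} => (b p - T p) / (a p.1 0 : K)) fun q p => by
    have hp : (0 : K) < a p.1 0 := Rat.cast_pos.2 p.2
    have hq : (0 : K) < -(a q.1 0 : K) := neg_pos.2 (Rat.cast_lt_zero.2 q.2)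
    have := hy (.inl (p, q))
    rw [sum_fourierMotzkinCoeff_mul] at this
    simp only [fourierMotzkinBound, Rat.cast_sub, Rat.cast_mul] at this
    rw [div_le_div_iff₀ hq hp]
    nlinarith
  refine ⟨Fin.cons t y, fun i => ?_⟩
  rw [sum_mul_cons]
  rcases lt_trichotomy (a i 0) 0 with hi | hi | hi
  · have := hlow ⟨i, hi⟩
    rw [div_le_iff₀ (neg_pos.2 (Rat.cast_lt_zero.2 hi))] at this
    linarith
  · simpa [fourierMotzkinCoeff, fourierMotzkinBound, hi] using hy (.inr ⟨i, hi⟩)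
  · have := hupp ⟨i, hi⟩
    rw [le_div_iff₀ (Rat.cast_pos.2 hi)] at this
    linarith

lemma solvableOver_iff_fourierMotzkin [Fintype ι] :
    SolvableOver K a b ↔ SolvableOver K (fourierMotzkinCoeff a) (fourierMotzkinBound a b) :=
  ⟨.fourierMotzkin, .of_fourierMotzkin⟩

end Elimination

lemma solvableOver_fin_zero_iff (a : ι → Fin 0 → ℚ) (b : ι → ℚ) :
    SolvableOver K a b ↔ ∀ i, 0 ≤ b i := by
  simp [SolvableOver]

variable (K L) in
lemma solvableOver_fin_iff [Fintype ι] {n : ℕ} (a : ι → Fin n → ℚ) (b : ι → ℚ) :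
    SolvableOver K a b ↔ SolvableOver L a b := by
  induction n generalizing ι with
  | zero => rw [solvableOver_fin_zero_iff, solvableOver_fin_zero_iff]
  | succ n ih => rw [solvableOver_iff_fourierMotzkin, solvableOver_iff_fourierMotzkin, ih]

omit [IsStrictOrderedRing K] in
lemma solvableOver_equiv_iff {W : Type*} [Fintype W] (e : V ≃ W) (a : ι → V → ℚ)
    (b : ι → ℚ) : SolvableOver K a b ↔ SolvableOver K (fun i w => a i (e.symm w)) b := by
  refine ⟨fun ⟨x, hx⟩ => ⟨x ∘ e.symm, fun i => ?_⟩,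
    fun ⟨x, hx⟩ => ⟨x ∘ e, fun i => ?_⟩⟩
  · simpa [← e.symm.sum_comp] using hx i
  · simpa [← e.sum_comp] using hx i

variable (K L) in
theorem solvableOver_iff [Fintype ι] (a : ι → V → ℚ) (b : ι → ℚ) :
    SolvableOver K a b ↔ SolvableOver L a b := by
  rw [solvableOver_equiv_iff (Fintype.equivFin V), solvableOver_equiv_iff (Fintype.equivFin V),
    solvableOver_fin_iff K L]

variable (K L) in
theorem exists_forall_sum_pos_of_exists_forall_sum_pos [Fintype ι] (N : ι → V → ℚ)
    (h : ∃ x : V → K, ∀ i, 0 < ∑ v, (N i v : K) * x v) :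
    ∃ x : V → L, ∀ i, 0 < ∑ v, (N i v : L) * x v := by
  obtain ⟨x, hx⟩ := h
  cases isEmpty_or_nonempty ι with
  | inl _ => exact ⟨0, isEmptyElim⟩
  | inr _ =>
  obtain ⟨i₀, hi₀⟩ := Finite.exists_min fun i => ∑ v, (N i v : K) * x v
  -- dividing `x` by its least value turns the strict system into the non-strict `N x ≥ 1`
  obtain ⟨y, hy⟩ : SolvableOver L (fun i v => -N i v) (fun _ => -1) := by
    rw [solvableOver_iff L K]
    refine ⟨(∑ v, (N i₀ v : K) * x v)⁻¹ • x, fun i => ?_⟩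
    have hscale : ∑ v, (N i v : K) * ((∑ v, (N i₀ v : K) * x v)⁻¹ • x) v =
        (∑ v, (N i₀ v : K) * x v)⁻¹ * ∑ v, (N i v : K) * x v := by
      simp only [Pi.smul_apply, smul_eq_mul, mul_sum, mul_left_comm]
    simp only [Rat.cast_neg, Rat.cast_one, neg_mul, sum_neg_distrib, neg_le_neg_iff, hscale]
    exact (one_le_inv_mul₀ (hx i₀)).2 (hi₀ i)
  refine ⟨y, fun i => ?_⟩
  have := hy i
  simp only [Rat.cast_neg, Rat.cast_one, neg_mul, sum_neg_distrib, neg_le_neg_iff] at this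
  linarith

end LinearSystems

section Alternative

open Filter Topology

variable {S J : Type*} [Fintype S] [Fintype J]

theorem exists_stdSimplex_or_exists_nonneg (M : S → J → ℝ) :
    (∃ μ ∈ stdSimplex ℝ S, ∀ j, ∑ s, μ s * M s j ≤ 0) ∨
      ∃ w : J → ℝ, 0 ≤ w ∧ ∀ s, 0 < ∑ j, M s j * w j := by
  classical
  set φ : (S → ℝ) →ₗ[ℝ] (J → ℝ) := -Matrix.vecMulLinear M
  have hφ (μ : S → ℝ) (j : J) : φ μ j = -∑ s, μ s * M s j := rfl
  by_cases hdisj : Disjoint (φ '' stdSimplex ℝ S) (ProperCone.positive ℝ (J → ℝ))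
  · right
    obtain ⟨f, hfC, hfK⟩ := (ProperCone.positive ℝ (J → ℝ)).hyperplane_separation
      ((convex_stdSimplex ℝ S).linear_image φ)
      ((isCompact_stdSimplex ℝ S).image φ.continuous_of_finiteDimensional) hdisj
    refine ⟨fun j => f fun k => if j = k then 1 else 0, fun j => hfC _ fun k => by positivity,
      fun s => ?_⟩
    have := hfK _ ⟨_, single_mem_stdSimplex ℝ s, rfl⟩
    rw [← ContinuousLinearMap.coe_coe, LinearMap.pi_apply_eq_sum_univ] at this
    simpa [hφ, Pi.single_apply, eq_comm] using this
  · left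
    obtain ⟨_, ⟨μ, hμ, rfl⟩, hpos⟩ := Set.not_disjoint_iff.1 hdisj
    exact ⟨μ, hμ, fun j => by simpa [hφ] using hpos j⟩

lemma exists_pos_of_exists_nonneg (M : S → J → ℝ) {w : J → ℝ} (hw : 0 ≤ w)
    (hM : ∀ s, 0 < ∑ j, M s j * w j) :
    ∃ w' : J → ℝ, (∀ j, 0 < w' j) ∧ ∀ s, 0 < ∑ j, M s j * w' j := by
  have hnear : ∀ᶠ ε in 𝓝[>] (0 : ℝ), ∀ s, 0 < ∑ j, M s j * (w j + ε) := by
    refine Eventually.filter_mono nhdsWithin_le_nhds (eventually_all.2 fun s => ?_)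
    have hcont : Continuous fun ε : ℝ => ∑ j, M s j * (w j + ε) := by fun_prop
    exact hcont.continuousAt.eventually (lt_mem_nhds (by simpa using hM s))
  obtain ⟨ε, hε, hεpos⟩ := (hnear.and self_mem_nhdsWithin).exists
  exact ⟨fun j => w j + ε, fun j => add_pos_of_nonneg_of_pos (hw j) hεpos, hε⟩

theorem exists_rat_stdSimplex_or_exists_pos (M : S → J → ℚ) :
    (∃ μ : S → ℚ, (∀ s, 0 ≤ μ s) ∧ ∑ s, μ s = 1 ∧ ∀ j, ∑ s, μ s * M s j ≤ 0) ∨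
      ∃ w : J → ℚ, (∀ j, 0 < w j) ∧ ∀ s, 0 < ∑ j, M s j * w j := by
  classical
  rcases exists_stdSimplex_or_exists_nonneg fun s j => (M s j : ℝ) with
    ⟨μ, ⟨hμ0, hμ1⟩, hμM⟩ | ⟨w, hw, hwM⟩
  · left
    obtain ⟨ν, hν0, hνM, hν1, hν1'⟩ : ∃ ν : S → ℚ, (∀ s, 0 ≤ ν s) ∧
        (∀ j, ∑ s, M s j * ν s ≤ 0) ∧ 1 ≤ ∑ s, ν s ∧ ∑ s, ν s ≤ 1 := by
      simpa [SolvableOver, Sum.forall, Pi.single_apply, apply_ite] using (solvableOver_iff ℝ ℚ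
        (Sum.elim (fun s v => -(Pi.single s 1 : S → ℚ) v)
          (Sum.elim (fun j v => M v j) fun (b : Bool) _ => if b then 1 else -1))
        (Sum.elim 0 (Sum.elim 0 fun (b : Bool) => if b then 1 else -1))).1
        ⟨μ, by simp [Sum.forall, Pi.single_apply, apply_ite, hμ0, mul_comm, hμM, hμ1]⟩
    exact ⟨ν, hν0, le_antisymm hν1' hν1, fun j => by simpa only [mul_comm] using hνM j⟩
  · right
    obtain ⟨w', hw'0, hw'M⟩ := exists_pos_of_exists_nonneg _ hw hwM
    simpa [Sum.forall, Pi.single_apply] using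
      exists_forall_sum_pos_of_exists_forall_sum_pos ℝ ℚ
        (Sum.elim (fun j k => (Pi.single j 1 : J → ℚ) k) M)
        ⟨w', by simp [Sum.forall, Pi.single_apply, apply_ite, hw'0, hw'M]⟩

end Alternative

lemma EReal.coe_rat_sum {ι : Type*} (s : Finset ι) (f : ι → ℚ) :
    (((∑ i ∈ s, f i : ℚ) : ℝ) : EReal) = ∑ i ∈ s, ((f i : ℝ) : EReal) := by
  push_cast
  exact map_sum (⟨⟨_, EReal.coe_zero⟩, EReal.coe_add⟩ : ℝ →+ EReal) _ _

lemma EReal.sum_eq_top {ι : Type*} {s : Finset ι} {f : ι → EReal}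
    (hbot : ∀ i ∈ s, f i ≠ ⊥) {i : ι} (hi : i ∈ s) (htop : f i = ⊤) : ∑ i ∈ s, f i = ⊤ := by
  classical
  have hrest : ∑ i ∈ s.erase i, f i ≠ ⊥ :=
    sum_induction _ (· ≠ ⊥) (fun _ _ ha hb => EReal.add_ne_bot_iff.2 ⟨ha, hb⟩)
      EReal.zero_ne_bot fun k hk => hbot k (mem_of_mem_erase hk)
  rw [← add_sum_erase s f hi, htop, EReal.top_add_of_ne_bot hrest]

lemma EReal.coe_nonneg_mul_ne_bot {x : ℝ} (hx : 0 ≤ x) {y : EReal} (hy : y ≠ ⊥) :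
    (x : EReal) * y ≠ ⊥ :=
  (EReal.mul_ne_bot _ _).2 ⟨.inl (EReal.coe_ne_bot x), .inr hy, .inl (EReal.coe_ne_top x),
    .inl (EReal.coe_nonneg.2 hx)⟩

lemma Fintype.sum_eq_sum_subtype_of_eq_zero {α M : Type*} [Fintype α] [AddCommMonoid M]
    (p : α → Prop) [DecidablePred p] {f : α → M} (hf : ∀ a, ¬p a → f a = 0) :
    ∑ a, f a = ∑ a : {a // p a}, f a := by
  rw [← Fintype.sum_subtype_add_sum_subtype p f,
    Fintype.sum_eq_zero _ fun a : {a // ¬p a} => hf a a.2, add_zero]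

section FractionalHom

variable (ar : σ → ℕ) {X A B D : Type}

lemma VCSPVal_eq_sum_sigma [Fintype X] (wX : ∀ R : σ, (Fin (ar R) → X) → ℚ)
    (c : ∀ R : σ, (Fin (ar R) → D) → EReal) (h : X → D) :
    VCSPVal ar wX c h = ∑ p : Σ R : σ, (Fin (ar R) → X),
      ((wX p.1 p.2 : ℝ) : EReal) * c p.1 fun i => h (p.2 i) := by
  rw [VCSPVal, ← univ_sigma_univ, sum_sigma]

def weightsOn {J : Set (Σ R : σ, (Fin (ar R) → X))} [DecidablePred (· ∈ J)] (w : J → ℚ) :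
    ∀ R : σ, (Fin (ar R) → X) → ℚ :=
  fun R x => if h : ⟨R, x⟩ ∈ J then w ⟨_, h⟩ else 0

variable {ar} {J : Set (Σ R : σ, (Fin (ar R) → X))} [DecidablePred (· ∈ J)] {w : J → ℚ}

omit [Fintype σ] in
lemma weightsOn_apply (j : J) : weightsOn ar w j.1.1 j.1.2 = w j := dif_pos j.2

omit [Fintype σ] in
lemma weightsOn_nonneg (hw : ∀ j, 0 ≤ w j) (R : σ) (x : Fin (ar R) → X) :
    0 ≤ weightsOn ar w R x := by
  unfold weightsOn
  split_ifs
  exacts [hw _, le_rfl]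

lemma VCSPVal_weightsOn [Fintype X] (c : ∀ R : σ, (Fin (ar R) → D) → EReal) (h : X → D)
    {q : J → ℚ} (hq : ∀ j : J, c j.1.1 (fun i => h (j.1.2 i)) = ((q j : ℝ) : EReal)) :
    VCSPVal ar (weightsOn ar w) c h = ((∑ j, w j * q j : ℚ) : ℝ) := by
  rw [VCSPVal_eq_sum_sigma, Fintype.sum_eq_sum_subtype_of_eq_zero (· ∈ J) fun p hp => by
    simp [weightsOn, hp], EReal.coe_rat_sum]
  refine sum_congr rfl fun j _ => ?_
  rw [weightsOn_apply, hq, Rat.cast_mul, EReal.coe_mul]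

lemma VCSPVal_weightsOn_eq_top [Fintype X] (hw : ∀ j, 0 < w j)
    {c : ∀ R : σ, (Fin (ar R) → D) → EReal} (hc : ∀ R t, c R t ≠ ⊥) {h : X → D} {j : J}
    (hj : c j.1.1 (fun i => h (j.1.2 i)) = ⊤) :
    VCSPVal ar (weightsOn ar w) c h = ⊤ := by
  rw [VCSPVal_eq_sum_sigma]
  refine EReal.sum_eq_top (fun p _ => EReal.coe_nonneg_mul_ne_bot ?_ (hc _ _)) (mem_univ j.1) ?_
  · exact_mod_cast weightsOn_nonneg (fun j => (hw j).le) p.1 p.2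
  · rw [weightsOn_apply, hj, EReal.coe_mul_top_of_pos (by exact_mod_cast hw j)]

omit [Fintype σ] in
lemma QInftyValued.ne_bot {c : ∀ R : σ, (Fin (ar R) → D) → EReal} (hc : QInftyValued ar c)
    (R : σ) (t : Fin (ar R) → D) : c R t ≠ ⊥ := by
  rcases hc R t with ⟨q, hq⟩ | hq <;> simp [hq]

omit [Fintype σ] in
lemma isFractionalHom_extend [Fintype A] [DecidableEq A] [Fintype B]
    {cA : ∀ R : σ, (Fin (ar R) → A) → EReal} {cB : ∀ R : σ, (Fin (ar R) → B) → EReal}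
    {J : Set (Σ R : σ, (Fin (ar R) → A))} [DecidablePred (· ∈ J)]
    (hJ : ∀ p ∉ J, cA p.1 p.2 = ⊤) {S : Set (A → B)} [DecidablePred (· ∈ S)]
    {qA : J → ℚ} (hqA : ∀ j : J, cA j.1.1 j.1.2 = ((qA j : ℝ) : EReal)) {qB : S → J → ℚ}
    (hqB : ∀ (s : S) (j : J), cB j.1.1 (fun i => s.1 (j.1.2 i)) = ((qB s j : ℝ) : EReal))
    {μ : S → ℚ} (hμ0 : ∀ s, 0 ≤ μ s) (hμ1 : ∑ s, μ s = 1)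
    (hμ : ∀ j, ∑ s, μ s * (qB s j - qA j) ≤ 0) :
    IsFractionalHom ar cA cB fun f => if h : f ∈ S then μ ⟨f, h⟩ else 0 := by
  have hext (s : S) : (if h : s.1 ∈ S then μ ⟨s, h⟩ else 0) = μ s := dif_pos s.2
  refine ⟨fun f => ?_, ?_, fun R a => ?_⟩
  · dsimp only
    split_ifs
    exacts [hμ0 _, le_rfl]
  · rw [Fintype.sum_eq_sum_subtype_of_eq_zero (· ∈ S) fun f hf => dif_neg hf]
    simpa only [hext] using hμ1
  · by_cases ha : ⟨R, a⟩ ∈ J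
    · set j : J := ⟨⟨R, a⟩, ha⟩
      have hle : ∑ s, μ s * qB s j ≤ qA j := by
        have := hμ j
        simp only [mul_sub, sum_sub_distrib, ← sum_mul, hμ1, one_mul] at this
        linarith
      calc ∑ f : A → B, (((if h : f ∈ S then μ ⟨f, h⟩ else 0 : ℚ) : ℝ) : EReal) *
            cB R (fun i => f (a i))
          = (((∑ s, μ s * qB s j : ℚ) : ℝ) : EReal) := by
            rw [Fintype.sum_eq_sum_subtype_of_eq_zero (· ∈ S) fun f hf => by simp [hf],
              EReal.coe_rat_sum]
            refine sum_congr rfl fun s _ => ?_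
            rw [hext, hqB s j, Rat.cast_mul, EReal.coe_mul]
        _ ≤ ((qA j : ℝ) : EReal) := by exact_mod_cast hle
        _ = cA R a := (hqA j).symm
    · rw [hJ _ ha]
      exact le_top

lemma VCSPOpt_weightsOn_lt [Fintype A] [DecidableEq A] [Fintype B]
    {cA : ∀ R : σ, (Fin (ar R) → A) → EReal} {cB : ∀ R : σ, (Fin (ar R) → B) → EReal}
    (hB : ∀ R t, cB R t ≠ ⊥) {J : Set (Σ R : σ, (Fin (ar R) → A))} [DecidablePred (· ∈ J)]
    {S : Set (A → B)} [DecidablePred (· ∈ S)]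
    (hS : ∀ f ∉ S, ∃ j : J, cB j.1.1 (fun i => f (j.1.2 i)) = ⊤)
    {qA : J → ℚ} (hqA : ∀ j : J, cA j.1.1 j.1.2 = ((qA j : ℝ) : EReal)) {qB : S → J → ℚ}
    (hqB : ∀ (s : S) (j : J), cB j.1.1 (fun i => s.1 (j.1.2 i)) = ((qB s j : ℝ) : EReal))
    {w : J → ℚ} (hw : ∀ j, 0 < w j) (hwM : ∀ s, 0 < ∑ j, (qB s j - qA j) * w j) :
    VCSPOpt ar (weightsOn ar w) cA < VCSPOpt ar (weightsOn ar w) cB := by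
  have hValA : VCSPVal ar (weightsOn ar w) cA id = ((∑ j, w j * qA j : ℚ) : ℝ) :=
    VCSPVal_weightsOn cA id hqA
  refine (iInf_le _ id).trans_lt ?_
  rw [hValA, VCSPOpt, ← Finset.inf_univ_eq_iInf, Finset.lt_inf_iff (EReal.coe_lt_top _)]
  intro f _
  by_cases hf : f ∈ S
  · rw [VCSPVal_weightsOn cB f (hqB ⟨f, hf⟩)]
    have hlt : ∑ j, w j * qA j < ∑ j, w j * qB ⟨f, hf⟩ j := by
      simpa only [sub_mul, sum_sub_distrib, sub_pos, mul_comm (w _)] using hwM ⟨f, hf⟩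
    exact_mod_cast hlt
  · obtain ⟨j, hj⟩ := hS f hf
    rw [VCSPVal_weightsOn_eq_top hw hB hj]
    exact EReal.coe_lt_top _

end FractionalHom

theorem stmt8_general (ar : σ → ℕ) {A B : Type} [Fintype A] [DecidableEq A] [Fintype B]
    (cA : ∀ R : σ, (Fin (ar R) → A) → EReal)
    (cB : ∀ R : σ, (Fin (ar R) → B) → EReal)
    (hA : QInftyValued ar cA) (hB : QInftyValued ar cB)
    (hopt : ∀ (X : Type) [Fintype X] (wX : ∀ R : σ, (Fin (ar R) → X) → ℚ),
      (∀ R x, 0 ≤ wX R x) → VCSPOpt ar wX cB ≤ VCSPOpt ar wX cA) :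
    ∃ μ : (A → B) → ℚ, IsFractionalHom ar cA cB μ := by
  classical
  set J : Set (Σ R : σ, (Fin (ar R) → A)) := {p | cA p.1 p.2 ≠ ⊤}
  set S : Set (A → B) := {f | ∀ j : J, cB j.1.1 (fun i => f (j.1.2 i)) ≠ ⊤}
  choose qA hqA using fun j : J => (hA j.1.1 j.1.2).resolve_right j.2
  choose qB hqB using fun (s : S) (j : J) => (hB j.1.1 _).resolve_right (s.2 j)
  rcases exists_rat_stdSimplex_or_exists_pos fun s j => qB s j - qA j with
    ⟨μ, hμ0, hμ1, hμ⟩ | ⟨w, hw, hwM⟩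
  · exact ⟨_, isFractionalHom_extend (fun p hp => not_not.1 hp) hqA hqB hμ0 hμ1 hμ⟩
  · refine absurd (hopt A (weightsOn ar w) (weightsOn_nonneg fun j => (hw j).le)) (not_le.2 ?_)
    exact VCSPOpt_weightsOn_lt hB.ne_bot (fun f hf => by simpa [S] using hf) hqA hqB hw hwM

/-- If `Opt(𝐗,𝐁) ≤ Opt(𝐗,𝐀)` for every non-negative finite-valued input structure `𝐗`,
then there is a fractional homomorphism from `𝐀` to `𝐁`. -/
theorem stmt8 (ar : σ → ℕ) {A B : Type} [Fintype A] [DecidableEq A] [Fintype B]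
    [Nonempty A] [Nonempty B]
    (cA : ∀ R : σ, (Fin (ar R) → A) → EReal)
    (cB : ∀ R : σ, (Fin (ar R) → B) → EReal)
    (hA : QInftyValued ar cA) (hB : QInftyValued ar cB)
    (hopt : ∀ (X : Type) [Fintype X] (wX : ∀ R : σ, (Fin (ar R) → X) → ℚ),
      (∀ R x, 0 ≤ wX R x) → VCSPOpt ar wX cB ≤ VCSPOpt ar wX cA) :
    ∃ μ : (A → B) → ℚ, IsFractionalHom ar cA cB μ :=
  stmt8_general ar cA cB hA hB hopt
end

section
/- Let 𝐗 and 𝐘 be non-negative finite-valued σ-structures over finite universes such that there is no dual fractional homomorphism from 𝐗 to 𝐘. Then there exists a valued σ-structure 𝐀 (which can be taken with universe Y and finite non-negative values) such that Opt(𝐘,𝐀) < Opt(𝐗,𝐀). -/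
open Finset BigOperators

variable {σ : Type} [Fintype σ]

/-- A dual fractional homomorphism from the non-negative finite-valued structure `wX`
to `wY`: a probability distribution `η` on functions `X → Y` such that for every symbol
`R` and every tuple `y`, `R^𝐘(y) ≥ Σ_f η(f)·Σ_{x : f∘x = y} R^𝐗(x)`. -/
def IsDualFractionalHom (ar : σ → ℕ) {X Y : Type} [Fintype X] [DecidableEq X]
    [Fintype Y] [DecidableEq Y]
    (wX : ∀ R : σ, (Fin (ar R) → X) → ℚ)
    (wY : ∀ R : σ, (Fin (ar R) → Y) → ℚ)
    (η : (X → Y) → ℚ) : Prop :=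
  (∀ f, 0 ≤ η f) ∧ (∑ f : X → Y, η f = 1) ∧
  ∀ (R : σ) (y : Fin (ar R) → Y),
    ∑ f : X → Y, η f *
      ∑ x ∈ Finset.univ.filter (fun x : Fin (ar R) → X => (fun i => f (x i)) = y), wX R x
    ≤ wY R y

theorem myFarkas : ∀ (n : ℕ) (K : Type) [Fintype K] (a : K → Fin n → ℚ) (β : K → ℚ),
    (¬ ∃ x : Fin n → ℚ, ∀ k : K, ∑ i, a k i * x i ≤ β k) →
    ∃ lam : K → ℚ, (∀ k, 0 ≤ lam k) ∧ (∀ j, ∑ k, lam k * a k j = 0) ∧ ∑ k, lam k * β k < 0 := by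
  intro n
  induction n with
  | zero =>
    intro K _ a β hinf
    have : ∃ k, β k < 0 := by
      by_contra hc
      push_neg at hc
      exact hinf ⟨fun i => 0, fun k => by simpa using hc k⟩
    obtain ⟨k₀, hk₀⟩ := this
    classical
    refine ⟨fun k => if k = k₀ then 1 else 0, ?_, ?_, ?_⟩
    · intro k; dsimp only; split <;> norm_num
    · exact fun j => j.elim0
    · simp [ite_mul, Finset.sum_ite_eq' Finset.univ k₀ β, hk₀]
  | succ n ih =>
    intro K _ a β hinf
    classical
    set L := Fin.last n with hL
    set a' : (K ⊕ K × K) → Fin n → ℚ := Sum.elim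
      (fun k i => if a k L = 0 then a k i.castSucc else 0)
      (fun pm i => if 0 < a pm.1 L ∧ a pm.2 L < 0 then
        (-(a pm.2 L)) * a pm.1 i.castSucc + a pm.1 L * a pm.2 i.castSucc else 0) with ha'
    set β' : (K ⊕ K × K) → ℚ := Sum.elim
      (fun k => if a k L = 0 then β k else 0)
      (fun pm => if 0 < a pm.1 L ∧ a pm.2 L < 0 then
        (-(a pm.2 L)) * β pm.1 + a pm.1 L * β pm.2 else 0) with hβ'
    -- Step 1 : the eliminated system is infeasible
    have hinf' : ¬ ∃ x' : Fin n → ℚ, ∀ k', ∑ i, a' k' i * x' i ≤ β' k' := by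
      rintro ⟨x', hx'⟩
      apply hinf
      set s : K → ℚ := fun k => ∑ i : Fin n, a k i.castSucc * x' i with hs
      set u : K → ℚ := fun k => (β k - s k) / (a k L) with hu
      set Kp : Finset K := Finset.univ.filter (fun p => 0 < a p L) with hKp
      set Km : Finset K := Finset.univ.filter (fun m => a m L < 0) with hKm
      have key : ∀ p ∈ Kp, ∀ m ∈ Km, u m ≤ u p := by
        intro p hp m hm
        rw [hKp, Finset.mem_filter] at hp
        rw [hKm, Finset.mem_filter] at hm
        have hA : 0 < a p L := hp.2
        have hB : a m L < 0 := hm.2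
        have hcon := hx' (Sum.inr (p, m))
        rw [ha', hβ'] at hcon
        simp only [Sum.elim_inr, if_pos (And.intro hA hB)] at hcon
        have hsum : ∑ i : Fin n, ((-(a m L)) * a p i.castSucc + a p L * a m i.castSucc) * x' i
            = (-(a m L)) * s p + a p L * s m := by
          rw [hs]
          rw [Finset.mul_sum, Finset.mul_sum, ← Finset.sum_add_distrib]
          apply Finset.sum_congr rfl
          intro i _
          ring
        rw [hsum] at hcon
        show (β m - s m) / a m L ≤ (β p - s p) / a p L
        rw [show (β m - s m) / a m L = (-(β m - s m)) / (-(a m L)) by rw [neg_div_neg_eq]]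
        rw [div_le_div_iff₀ (by linarith) hA]
        nlinarith [hcon]
      set v : ℚ := if hp : Kp.Nonempty then Kp.inf' hp u else
        if hm : Km.Nonempty then Km.sup' hm u else 0 with hv
      refine ⟨Fin.snoc x' v, ?_⟩
      intro k
      rw [Fin.sum_univ_castSucc]
      simp only [Fin.snoc_castSucc, Fin.snoc_last]
      have hgoal : s k + a k L * v ≤ β k → (∑ i : Fin n, a k i.castSucc * x' i) + a k L * v ≤ β k := by
        rw [hs]; exact id
      apply hgoal
      rcases lt_trichotomy (a k L) 0 with hk | hk | hk
      · -- lower bound row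
        have hkm : k ∈ Km := by rw [hKm, Finset.mem_filter]; exact ⟨Finset.mem_univ _, hk⟩
        have hvk : u k ≤ v := by
          rw [hv]
          split_ifs with hp hm
          · exact Finset.le_inf' hp u (fun p hpp => key p hpp k hkm)
          · exact Finset.le_sup' u hkm
          · exact absurd ⟨k, hkm⟩ hm
        have := mul_le_mul_of_nonpos_left hvk (le_of_lt hk)
        have huk : a k L * u k = β k - s k := by
          rw [hu, mul_div_cancel₀ _ (ne_of_lt hk)]
        linarith
      · -- zero row
        have hcon := hx' (Sum.inl k)
        rw [ha', hβ'] at hcon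
        simp only [Sum.elim_inl, if_pos hk] at hcon
        rw [hk, zero_mul, add_zero]
        exact hcon
      · -- upper bound row
        have hkp : k ∈ Kp := by rw [hKp, Finset.mem_filter]; exact ⟨Finset.mem_univ _, hk⟩
        have hne : Kp.Nonempty := ⟨k, hkp⟩
        have hvk : v ≤ u k := by
          rw [hv, dif_pos hne]
          exact Finset.inf'_le u hkp
        have := mul_le_mul_of_nonneg_left hvk (le_of_lt hk)
        have huk : a k L * u k = β k - s k := by
          rw [hu, mul_div_cancel₀ _ (ne_of_gt hk)]
        linarith
    -- Step 2 : apply the induction hypothesis and recombine multipliers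
    obtain ⟨lam', h0', hcol', hβ'lt⟩ := ih (K ⊕ K × K) a' β' hinf'
    set lam : K → ℚ := fun k =>
      (if a k L = 0 then lam' (Sum.inl k) else 0)
      + (if 0 < a k L then ∑ m : K, (if a m L < 0 then lam' (Sum.inr (k, m)) * (-(a m L)) else 0) else 0)
      + (if a k L < 0 then ∑ p : K, (if 0 < a p L then lam' (Sum.inr (p, k)) * (a p L) else 0) else 0)
      with hlam
    have main : ∀ γ : K → ℚ, ∑ k, lam k * γ k =
        ∑ k, lam' (Sum.inl k) * (if a k L = 0 then γ k else 0)
        + ∑ p, ∑ m, lam' (Sum.inr (p, m)) *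
            (if 0 < a p L ∧ a m L < 0 then (-(a m L)) * γ p + a p L * γ m else 0) := by
      intro γ
      have expand : ∀ k, lam k * γ k =
          lam' (Sum.inl k) * (if a k L = 0 then γ k else 0)
          + ∑ m, (if 0 < a k L ∧ a m L < 0 then lam' (Sum.inr (k, m)) * ((-(a m L)) * γ k) else 0)
          + ∑ p, (if 0 < a p L ∧ a k L < 0 then lam' (Sum.inr (p, k)) * (a p L * γ k) else 0) := by
        intro k
        rw [hlam]
        simp only [add_mul]
        congr 1
        · congr 1
          · split_ifs <;> ring
          · split_ifs with h
            · rw [Finset.sum_mul]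
              apply Finset.sum_congr rfl
              intro m _
              simp only [h, true_and]
              split_ifs with h2 <;> ring
            · rw [zero_mul]
              symm; apply Finset.sum_eq_zero
              intro m _
              rw [if_neg]; tauto
        · split_ifs with h
          · rw [Finset.sum_mul]
            apply Finset.sum_congr rfl
            intro p _
            simp only [h, and_true]
            split_ifs with h2 <;> ring
          · rw [zero_mul]
            symm; apply Finset.sum_eq_zero
            intro p _
            rw [if_neg]; tauto
      calc ∑ k, lam k * γ k
          = ∑ k, (lam' (Sum.inl k) * (if a k L = 0 then γ k else 0)
            + ∑ m, (if 0 < a k L ∧ a m L < 0 then lam' (Sum.inr (k, m)) * ((-(a m L)) * γ k) else 0)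
            + ∑ p, (if 0 < a p L ∧ a k L < 0 then lam' (Sum.inr (p, k)) * (a p L * γ k) else 0)) :=
            Finset.sum_congr rfl (fun k _ => expand k)
        _ = ∑ k, lam' (Sum.inl k) * (if a k L = 0 then γ k else 0)
            + (∑ k, ∑ m, (if 0 < a k L ∧ a m L < 0 then lam' (Sum.inr (k, m)) * ((-(a m L)) * γ k) else 0)
            + ∑ k, ∑ p, (if 0 < a p L ∧ a k L < 0 then lam' (Sum.inr (p, k)) * (a p L * γ k) else 0)) := by
            rw [← Finset.sum_add_distrib, ← Finset.sum_add_distrib]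
            apply Finset.sum_congr rfl
            intro k _
            ring
        _ = ∑ k, lam' (Sum.inl k) * (if a k L = 0 then γ k else 0)
            + ∑ p, ∑ m, lam' (Sum.inr (p, m)) *
              (if 0 < a p L ∧ a m L < 0 then (-(a m L)) * γ p + a p L * γ m else 0) := by
            congr 1
            rw [Finset.sum_comm (f := fun k p => (if 0 < a p L ∧ a k L < 0 then lam' (Sum.inr (p, k)) * (a p L * γ k) else 0))]
            rw [← Finset.sum_add_distrib]
            apply Finset.sum_congr rfl
            intro p _
            rw [← Finset.sum_add_distrib]
            apply Finset.sum_congr rfl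
            intro m _
            split_ifs <;> ring
    refine ⟨lam, ?_, ?_, ?_⟩
    · intro k
      rw [hlam]
      dsimp only
      have n1 : (0:ℚ) ≤ if a k L = 0 then lam' (Sum.inl k) else 0 := by
        split_ifs; exacts [h0' _, le_refl 0]
      have n2 : (0:ℚ) ≤ if 0 < a k L then ∑ m : K, (if a m L < 0 then lam' (Sum.inr (k, m)) * (-(a m L)) else 0) else 0 := by
        split_ifs with h
        · apply Finset.sum_nonneg
          intro m _
          split_ifs with h2
          · exact mul_nonneg (h0' _) (by linarith)
          · exact le_refl 0
        · exact le_refl 0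
      have n3 : (0:ℚ) ≤ if a k L < 0 then ∑ p : K, (if 0 < a p L then lam' (Sum.inr (p, k)) * (a p L) else 0) else 0 := by
        split_ifs with h
        · apply Finset.sum_nonneg
          intro p _
          split_ifs with h2
          · exact mul_nonneg (h0' _) (by linarith)
          · exact le_refl 0
        · exact le_refl 0
      linarith
    · intro j
      rcases Fin.eq_castSucc_or_eq_last j with ⟨i, rfl⟩ | rfl
      · rw [main (fun k => a k i.castSucc)]
        have := hcol' i
        rw [Fintype.sum_sum_type, Fintype.sum_prod_type] at this
        rw [ha'] at this
        simpa using this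
      · rw [main (fun k => a k L)]
        have e1 : ∑ k, lam' (Sum.inl k) * (if a k L = 0 then a k L else 0) = 0 := by
          apply Finset.sum_eq_zero
          intro k _
          split_ifs with h
          · rw [h, mul_zero]
          · rw [mul_zero]
        have e2 : ∑ p, ∑ m, lam' (Sum.inr (p, m)) *
            (if 0 < a p L ∧ a m L < 0 then (-(a m L)) * a p L + a p L * a m L else 0) = 0 := by
          apply Finset.sum_eq_zero
          intro p _
          apply Finset.sum_eq_zero
          intro m _
          split_ifs with h
          · rw [show (-(a m L)) * a p L + a p L * a m L = 0 by ring, mul_zero]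
          · rw [mul_zero]
        rw [e1, e2, add_zero]
    · rw [main β]
      have := hβ'lt
      rw [Fintype.sum_sum_type, Fintype.sum_prod_type] at this
      rw [hβ'] at this
      simpa using this

lemma erealCoeSum {ι : Type*} (s : Finset ι) (f : ι → ℝ) :
    ((∑ i ∈ s, f i : ℝ) : EReal) = ∑ i ∈ s, ((f i : ℝ) : EReal) :=
  map_sum (⟨⟨(fun x : ℝ => (x : EReal)), EReal.coe_zero⟩, EReal.coe_add⟩ : ℝ →+ EReal) f s

/-- If there is no dual fractional homomorphism from `𝐗` to `𝐘`, then there is a valued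
structure `𝐀` with universe `Y` and finite non-negative values such that
`Opt(𝐘,𝐀) < Opt(𝐗,𝐀)`. -/
theorem stmt10 (ar : σ → ℕ) {X Y : Type} [Fintype X] [DecidableEq X]
    [Fintype Y] [DecidableEq Y] [Nonempty Y]
    (wX : ∀ R : σ, (Fin (ar R) → X) → ℚ) (hwX : ∀ R x, 0 ≤ wX R x)
    (wY : ∀ R : σ, (Fin (ar R) → Y) → ℚ) (hwY : ∀ R y, 0 ≤ wY R y)
    (hno : ¬ ∃ η : (X → Y) → ℚ, IsDualFractionalHom ar wX wY η) :
    ∃ cA : ∀ R : σ, (Fin (ar R) → Y) → ℚ,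
      (∀ R y, 0 ≤ cA R y) ∧
      VCSPOpt ar wY (fun R y => ((cA R y : ℝ) : EReal)) <
        VCSPOpt ar wX (fun R y => ((cA R y : ℝ) : EReal)) := by
  classical
  set S : (X → Y) → (Σ R : σ, (Fin (ar R) → Y)) → ℚ := fun f p =>
    ∑ x ∈ Finset.univ.filter (fun x : Fin (ar p.1) → X => (fun i => f (x i)) = p.2), wX p.1 x
    with hSdef
  set n := Fintype.card (X → Y) with hn
  set e : (X → Y) ≃ Fin n := Fintype.equivFin (X → Y) with he
  set a : ((Σ R : σ, (Fin (ar R) → Y)) ⊕ ((X → Y) ⊕ Bool)) → Fin n → ℚ :=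
    Sum.elim (fun p i => S (e.symm i) p)
      (Sum.elim (fun f i => if i = e f then -1 else 0) (fun b _ => if b then 1 else -1)) with ha
  set β : ((Σ R : σ, (Fin (ar R) → Y)) ⊕ ((X → Y) ⊕ Bool)) → ℚ :=
    Sum.elim (fun p => wY p.1 p.2) (Sum.elim (fun _ => 0) (fun b => if b then 1 else -1)) with hβ
  have hinf : ¬ ∃ x : Fin n → ℚ, ∀ k, ∑ i, a k i * x i ≤ β k := by
    rintro ⟨x, hx⟩
    apply hno
    refine ⟨fun f => x (e f), ?_, ?_, ?_⟩
    · intro f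
      have hcon := hx (Sum.inr (Sum.inl f))
      simp only [ha, hβ, Sum.elim_inr, Sum.elim_inl] at hcon
      have h2 : ∀ i ∈ Finset.univ, (if i = e f then (-1:ℚ) else 0) * x i
          = if i = e f then -x i else 0 := fun i _ => by split_ifs <;> ring
      rw [Finset.sum_congr rfl h2, Finset.sum_ite_eq' Finset.univ (e f) (fun i => -x i)] at hcon
      simp only [Finset.mem_univ, if_true] at hcon
      linarith
    · have h1 := hx (Sum.inr (Sum.inr true))
      have h2 := hx (Sum.inr (Sum.inr false))
      simp only [ha, hβ, Sum.elim_inr, if_true] at h1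
      simp only [ha, hβ, Sum.elim_inr, Bool.false_eq_true, if_false] at h2
      have h3 : ∑ f : X → Y, x (e f) = ∑ i, x i := Equiv.sum_comp e x
      rw [h3]
      have h1' : ∑ i, x i ≤ 1 := by
        calc ∑ i, x i = ∑ i, (1:ℚ) * x i := by simp
        _ ≤ 1 := h1
      have h2' : ∑ i, (-1:ℚ) * x i ≤ -1 := h2
      have : -(∑ i, x i) ≤ -1 := by
        calc -(∑ i, x i) = ∑ i, (-1:ℚ) * x i := by rw [← Finset.sum_neg_distrib]; apply Finset.sum_congr rfl; intros; ring
        _ ≤ -1 := h2'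
      linarith
    · intro R y
      have hcon := hx (Sum.inl ⟨R, y⟩)
      simp only [ha, hβ, Sum.elim_inl] at hcon
      have h3 : ∑ f : X → Y, x (e f) * S f ⟨R, y⟩ = ∑ i, x i * S (e.symm i) ⟨R, y⟩ := by
        rw [← Equiv.sum_comp e (fun i => x i * S (e.symm i) ⟨R, y⟩)]
        simp
      calc ∑ f : X → Y, x (e f) *
            ∑ z ∈ Finset.univ.filter (fun z : Fin (ar R) → X => (fun i => f (z i)) = y), wX R z
          = ∑ f : X → Y, x (e f) * S f ⟨R, y⟩ := rfl
        _ = ∑ i, x i * S (e.symm i) ⟨R, y⟩ := h3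
        _ = ∑ i, S (e.symm i) ⟨R, y⟩ * x i := by apply Finset.sum_congr rfl; intros; ring
        _ ≤ wY R y := hcon
  obtain ⟨lam, hlam0, hcol, hβlt⟩ := myFarkas n _ a β hinf
  set c : ∀ R : σ, (Fin (ar R) → Y) → ℚ := fun R y => lam (Sum.inl ⟨R, y⟩) with hc
  refine ⟨c, fun R y => hlam0 _, ?_⟩
  set T : ℚ := lam (Sum.inr (Sum.inr false)) - lam (Sum.inr (Sum.inr true)) with hT
  set D : ℚ := ∑ p : (Σ R : σ, (Fin (ar R) → Y)), lam (Sum.inl p) * wY p.1 p.2 with hD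
  -- D < T
  have hDT : D < T := by
    have := hβlt
    rw [Fintype.sum_sum_type, Fintype.sum_sum_type] at this
    simp only [hβ, Sum.elim_inl, Sum.elim_inr, mul_zero, Finset.sum_const_zero,
      Fintype.sum_bool, if_true, Bool.false_eq_true, if_false, mul_one] at this
    rw [hT, hD]
    have h4 : ∑ p : (Σ R : σ, (Fin (ar R) → Y)), lam (Sum.inl p) * wY p.1 p.2
        + (0 + (lam (Sum.inr (Sum.inr true)) * 1 + lam (Sum.inr (Sum.inr false)) * (-1))) < 0 := by
      convert this using 2 <;> ring_nf <;> simp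
    linarith
  -- column identities
  have hcolf : ∀ f : X → Y,
      ∑ p : (Σ R : σ, (Fin (ar R) → Y)), lam (Sum.inl p) * S f p
        = lam (Sum.inr (Sum.inl f)) + T := by
    intro f
    have hcf := hcol (e f)
    rw [Fintype.sum_sum_type, Fintype.sum_sum_type] at hcf
    simp only [ha, Sum.elim_inl, Sum.elim_inr, Equiv.symm_apply_apply, Fintype.sum_bool,
      if_true, Bool.false_eq_true, if_false] at hcf
    have hmid : ∑ g : X → Y, lam (Sum.inr (Sum.inl g)) * (if e f = e g then (-1:ℚ) else 0)
        = - lam (Sum.inr (Sum.inl f)) := by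
      have h2 : ∀ g ∈ Finset.univ, lam (Sum.inr (Sum.inl g)) * (if e f = e g then (-1:ℚ) else 0)
          = if g = f then -lam (Sum.inr (Sum.inl g)) else 0 := by
        intro g _
        by_cases hg : g = f
        · subst hg; simp
        · have hne : e f ≠ e g := fun hcontra => hg (e.injective hcontra.symm)
          rw [if_neg hne, if_neg hg, mul_zero]
      rw [Finset.sum_congr rfl h2, Finset.sum_ite_eq' Finset.univ f
        (fun g => -lam (Sum.inr (Sum.inl g)))]
      simp
    rw [hmid] at hcf
    rw [hT]
    linarith
  -- value computation lemma
  have hval : ∀ (Z : Type) (_ : Fintype Z) (wZ : ∀ R : σ, (Fin (ar R) → Z) → ℚ) (h : Z → Y),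
      VCSPVal ar wZ (fun R y => ((c R y : ℝ) : EReal)) h =
        (((∑ R : σ, ∑ z : Fin (ar R) → Z, wZ R z * c R (fun i => h (z i)) : ℚ) : ℝ) : EReal) := by
    intro Z _ wZ h
    rw [VCSPVal]
    have hr : ((∑ R : σ, ∑ z : Fin (ar R) → Z, wZ R z * c R (fun i => h (z i)) : ℚ) : ℝ)
        = ∑ R : σ, ∑ z : Fin (ar R) → Z, ((wZ R z : ℝ) * (c R (fun i => h (z i)) : ℝ)) := by
      push_cast; ring
    rw [hr, erealCoeSum]
    refine Finset.sum_congr rfl fun R _ => ?_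
    rw [erealCoeSum]
    exact Finset.sum_congr rfl fun z _ => (EReal.coe_mul _ _).symm
  -- upper bound for Opt(Y)
  have hYopt : VCSPOpt ar wY (fun R y => ((c R y : ℝ) : EReal)) ≤ (((D : ℚ) : ℝ) : EReal) := by
    have h1 : VCSPVal ar wY (fun R y => ((c R y : ℝ) : EReal)) id = (((D : ℚ) : ℝ) : EReal) := by
      rw [hval Y inferInstance wY id]
      congr 2
      rw [hD, ← Finset.univ_sigma_univ, Finset.sum_sigma]
      exact Finset.sum_congr rfl fun R _ => Finset.sum_congr rfl fun y _ => by
        show wY R y * c R (fun i => y i) = lam (Sum.inl ⟨R, y⟩) * wY R y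
        rw [show (fun i => y i) = y from rfl]
        rw [hc]; ring
    rw [← h1]
    exact iInf_le _ id
  -- lower bound for Opt(X)
  have hXopt : (((T : ℚ) : ℝ) : EReal) ≤ VCSPOpt ar wX (fun R y => ((c R y : ℝ) : EReal)) := by
    apply le_iInf
    intro h
    rw [hval X inferInstance wX h]
    have hrat : T ≤ ∑ R : σ, ∑ z : Fin (ar R) → X, wX R z * c R (fun i => h (z i)) := by
      have hre : ∑ R : σ, ∑ z : Fin (ar R) → X, wX R z * c R (fun i => h (z i))
          = ∑ p : (Σ R : σ, (Fin (ar R) → Y)), lam (Sum.inl p) * S h p := by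
        rw [← Finset.univ_sigma_univ, Finset.sum_sigma]
        refine Finset.sum_congr rfl fun R _ => ?_
        have step1 : ∑ z : Fin (ar R) → X, wX R z * c R (fun i => h (z i))
            = ∑ y : Fin (ar R) → Y, ∑ z ∈ Finset.univ.filter
                (fun z : Fin (ar R) → X => (fun i => h (z i)) = y), wX R z * c R (fun i => h (z i)) := by
          exact (Finset.sum_fiberwise Finset.univ (fun z : Fin (ar R) → X => (fun i => h (z i)))
            (fun z => wX R z * c R (fun i => h (z i)))).symm
        rw [step1]
        refine Finset.sum_congr rfl fun y _ => ?_
        have step2 : ∑ z ∈ Finset.univ.filter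
              (fun z : Fin (ar R) → X => (fun i => h (z i)) = y), wX R z * c R (fun i => h (z i))
            = ∑ z ∈ Finset.univ.filter
              (fun z : Fin (ar R) → X => (fun i => h (z i)) = y), wX R z * c R y := by
          refine Finset.sum_congr rfl fun z hz => ?_
          rw [Finset.mem_filter] at hz
          rw [hz.2]
        rw [step2, ← Finset.sum_mul]
        show (∑ z ∈ Finset.univ.filter _, wX R z) * c R y = lam (Sum.inl ⟨R, y⟩) * S h ⟨R, y⟩
        rw [hc, hSdef]
        ring
      rw [hre, hcolf h]
      have := hlam0 (Sum.inr (Sum.inl h))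
      linarith
    have : (((T : ℚ) : ℝ)) ≤ ((∑ R : σ, ∑ z : Fin (ar R) → X, wX R z * c R (fun i => h (z i)) : ℚ) : ℝ) := by
      exact_mod_cast hrat
    exact_mod_cast EReal.coe_le_coe_iff.mpr this
  calc VCSPOpt ar wY (fun R y => ((c R y : ℝ) : EReal)) ≤ (((D : ℚ) : ℝ) : EReal) := hYopt
    _ < (((T : ℚ) : ℝ) : EReal) := by
        apply EReal.coe_lt_coe_iff.mpr
        exact_mod_cast hDT
    _ ≤ VCSPOpt ar wX (fun R y => ((c R y : ℝ) : EReal)) := hXopt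
end

section
/- Fix the PVCSP template 𝐀, 𝐁 on domain {0,1} with a single binary symbol R, where R^𝐀(a,a)=R^𝐁(a,a)=3, R^𝐀(a,b)=2 and R^𝐁(a,b)=0 for a≠b. For the input 𝐗 with X={x} and R^𝐗(x,x)=1, the BLP optimum satisfies Opt^BLP(𝐗,𝐀) ≤ 2 while Opt(𝐗,𝐁) = 3; hence BLP does not decide PVCSP(𝐀,𝐁). -/
open Finset BigOperators

/-- Feasibility of BLP(𝐗,𝐀) for the one-variable input `X = {x}` with the single
binary constraint `R(x,x)` of weight 1, over a template on domain `Bool`: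
variables `p a` (for `p_x(a)`) and `q a b` (for `p_{R(x,x)}(a,b)`) lie in `[0,1]`,
`Σ_a p a = 1`, and both marginals of `q` agree with `p` (no infinite costs occur). -/
def BLPfeas₁ (p : Bool → ℚ) (q : Bool → Bool → ℚ) : Prop :=
  (∀ a, 0 ≤ p a ∧ p a ≤ 1) ∧ (∀ a b, 0 ≤ q a b ∧ q a b ≤ 1) ∧
  (∑ a : Bool, p a = 1) ∧
  (∀ a, p a = ∑ b : Bool, q a b) ∧ (∀ a, p a = ∑ b : Bool, q b a)

/-- The BLP objective value for the above input: `Σ_{a,b} q a b · 1 · R^𝐀(a,b)`. -/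
def BLPobj₁ (Aval : Bool → Bool → ℚ) (q : Bool → Bool → ℚ) : ℚ :=
  ∑ a : Bool, ∑ b : Bool, q a b * Aval a b

/-- For the PVCSP template on `{0,1}` with one binary symbol `R`, where
`R^𝐀(a,a) = R^𝐁(a,a) = 3`, `R^𝐀(a,b) = 2` and `R^𝐁(a,b) = 0` for `a ≠ b`, and the
input `𝐗` with a single variable `x` and `R^𝐗(x,x) = 1`:
`Opt^BLP(𝐗,𝐀) ≤ 2` (witnessed by a feasible BLP solution of value ≤ 2) while
`Opt(𝐗,𝐁) = 3` (every assignment `h` has value 3); hence BLP does not decide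
PVCSP(𝐀,𝐁) on this instance. -/
theorem stmt15 (Aval Bval : Bool → Bool → ℚ)
    (hA : ∀ a b, Aval a b = if a = b then 3 else 2)
    (hB : ∀ a b, Bval a b = if a = b then 3 else 0) :
    (∃ (p : Bool → ℚ) (q : Bool → Bool → ℚ),
      BLPfeas₁ p q ∧ BLPobj₁ Aval q ≤ 2) ∧
    (∀ h : Bool, Bval h h = 3) ∧
    ¬ (∀ (p : Bool → ℚ) (q : Bool → Bool → ℚ),
        BLPfeas₁ p q → (3 : ℚ) ≤ BLPobj₁ Aval q) := by
  refine ⟨⟨fun _ => 1/2, fun a b => if a = b then 0 else 1/2, ?_, ?_⟩, ?_, ?_⟩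
  · refine ⟨fun a => by norm_num, fun a b => by cases a <;> cases b <;> norm_num, ?_, ?_, ?_⟩
    · simp [Fintype.sum_bool]
    · intro a; cases a <;> simp [Fintype.sum_bool]
    · intro a; cases a <;> simp [Fintype.sum_bool]
  · simp [BLPobj₁, hA, Fintype.sum_bool]; norm_num
  · intro h; simp [hB]
  · intro H
    have := H (fun _ => 1/2) (fun a b => if a = b then 0 else 1/2)
      ⟨fun a => by norm_num, fun a b => by cases a <;> cases b <;> norm_num,
       by simp [Fintype.sum_bool],
       fun a => by cases a <;> simp [Fintype.sum_bool],
       fun a => by cases a <;> simp [Fintype.sum_bool]⟩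
    simp [BLPobj₁, hA, Fintype.sum_bool] at this
    norm_num at this
end

section
/- Fix the PVCSP template 𝐀, 𝐁 on domain {0,1} with a single binary symbol R, where R^𝐀(a,a)=R^𝐁(a,a)=3, R^𝐀(a,b)=2 and R^𝐁(a,b)=0 for a≠b. Then SA¹ decides PVCSP(𝐀,𝐁): for every non-negative finite-valued input 𝐗 with a single binary valued relation, Opt(𝐗,𝐁) ≤ Opt^{SA¹}(𝐗,𝐀). Specifically, letting V_l = Σ_x R^𝐗(x,x) and V_e = Σ_{x≠y} R^𝐗(x,y), one has Opt(𝐗,𝐁) ≤ 3V_l + (3/2)V_e and Opt^{SA¹}(𝐗,𝐀) ≥ 3V_l + 2V_e. -/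
open Finset BigOperators

lemma splitAux {X : Type} [Fintype X] [DecidableEq X] (w : X → X → ℚ) (c d : ℚ) :
    c * (∑ x : X, w x x) + d * (∑ x : X, ∑ y : X, if x = y then 0 else w x y)
      = ∑ x : X, ∑ y : X, w x y * (if x = y then c else d) := by
  rw [Finset.mul_sum, Finset.mul_sum, ← Finset.sum_add_distrib]
  refine Finset.sum_congr rfl fun x _ => ?_
  have h1 : c * w x x = ∑ y : X, if x = y then c * w x y else 0 := by
    rw [Finset.sum_ite_eq]; simp
  rw [h1, Finset.mul_sum, ← Finset.sum_add_distrib]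
  refine Finset.sum_congr rfl fun y _ => ?_
  split_ifs <;> ring

lemma flipSum {X : Type} [Fintype X] [DecidableEq X] (g : Bool → Bool → ℚ)
    (x y : X) (hxy : x ≠ y) :
    ∑ h : X → Bool, g (h x) (h y) = ∑ h : X → Bool, g (h x) (!(h y)) := by
  have hinv : Function.Involutive
      (fun h : X → Bool => Function.update h y (!(h y))) := by
    intro h
    funext z
    by_cases hz : z = y
    · subst hz; simp
    · simp [Function.update_of_ne hz]
  calc ∑ h : X → Bool, g (h x) (h y)
      = ∑ h : X → Bool,
          g ((Function.update h y (!(h y))) x) ((Function.update h y (!(h y))) y) := by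
        exact (Fintype.sum_bijective _ hinv.bijective _ _ (fun h => rfl)).symm
    _ = ∑ h : X → Bool, g (h x) (!(h y)) := by
        refine Finset.sum_congr rfl fun h _ => ?_
        rw [Function.update_of_ne hxy, Function.update_self]


/-- Feasibility of SA¹(𝐗,𝐀) for a valued input `𝐗` with one binary valued relation of
weights `w` over a template on domain `Bool` with finite costs: variables `p x a` and
`q x y a b` are non-negative, `Σ_a p x a = 1`, marginals agree on every constraint
(pair `(x,y)` of positive weight), and `q x x a b = 0` for `a ≠ b` (the extra
loop/repetition constraint distinguishing SA¹ from BLP). -/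
def SA1feasV {X : Type} [Fintype X] (w : X → X → ℚ)
    (p : X → Bool → ℚ) (q : X → X → Bool → Bool → ℚ) : Prop :=
  (∀ x a, 0 ≤ p x a) ∧ (∀ x y a b, 0 ≤ q x y a b) ∧
  (∀ x, ∑ a : Bool, p x a = 1) ∧
  (∀ x y, w x y ≠ 0 → ∀ a, p x a = ∑ b : Bool, q x y a b) ∧
  (∀ x y, w x y ≠ 0 → ∀ b, p y b = ∑ a : Bool, q x y a b) ∧
  (∀ x a b, a ≠ b → q x x a b = 0)

/-- The SA¹ objective: `Σ_{R(x,y)} Σ_{a,b} q_{R(x,y)}(a,b) · R^𝐗(x,y) · R^𝐀(a,b)`. -/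
def SA1objV {X : Type} [Fintype X] (w : X → X → ℚ) (Aval : Bool → Bool → ℚ)
    (q : X → X → Bool → Bool → ℚ) : ℚ :=
  ∑ x : X, ∑ y : X, w x y * ∑ a : Bool, ∑ b : Bool, q x y a b * Aval a b

/-- The value `Val(𝐗,𝐁,h)` of an assignment `h`. -/
def ValV {X : Type} [Fintype X] (w : X → X → ℚ) (Bval : Bool → Bool → ℚ)
    (h : X → Bool) : ℚ :=
  ∑ x : X, ∑ y : X, w x y * Bval (h x) (h y)

/-- For the PVCSP template on `{0,1}` with one binary symbol `R`, where
`R^𝐀(a,a) = R^𝐁(a,a) = 3`, `R^𝐀(a,b) = 2` and `R^𝐁(a,b) = 0` for `a ≠ b`: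
SA¹ decides PVCSP(𝐀,𝐁). With `V_l = Σ_x R^𝐗(x,x)` and `V_e = Σ_{x≠y} R^𝐗(x,y)` one has
`Opt(𝐗,𝐁) ≤ 3·V_l + (3/2)·V_e`, every feasible SA¹ solution has objective value
`≥ 3·V_l + 2·V_e`, and hence `Opt(𝐗,𝐁) ≤ Opt^{SA¹}(𝐗,𝐀)`. -/
theorem stmt16 {X : Type} [Fintype X] [DecidableEq X]
    (Aval Bval : Bool → Bool → ℚ)
    (hA : ∀ a b, Aval a b = if a = b then 3 else 2)
    (hB : ∀ a b, Bval a b = if a = b then 3 else 0)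
    (w : X → X → ℚ) (hw : ∀ x y, 0 ≤ w x y) :
    (∃ h : X → Bool,
      ValV w Bval h ≤
        3 * (∑ x : X, w x x) + (3 / 2) * (∑ x : X, ∑ y : X, if x = y then 0 else w x y)) ∧
    (∀ (p : X → Bool → ℚ) (q : X → X → Bool → Bool → ℚ), SA1feasV w p q →
      3 * (∑ x : X, w x x) + 2 * (∑ x : X, ∑ y : X, if x = y then 0 else w x y) ≤
        SA1objV w Aval q) ∧
    (∀ (p : X → Bool → ℚ) (q : X → X → Bool → Bool → ℚ), SA1feasV w p q →
      ∃ h : X → Bool, ValV w Bval h ≤ SA1objV w Aval q) := by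
  set N : ℚ := (Fintype.card (X → Bool) : ℚ) with hN
  set Vl : ℚ := ∑ x : X, w x x with hVl
  set Ve : ℚ := ∑ x : X, ∑ y : X, if x = y then 0 else w x y with hVe
  have hVe0 : 0 ≤ Ve := by
    apply Finset.sum_nonneg; intro x _
    apply Finset.sum_nonneg; intro y _
    split_ifs <;> [exact le_refl 0; exact hw x y]
  -- key sums over all assignments
  have Sdiag : ∀ x : X, ∑ h : X → Bool, Bval (h x) (h x) = 3 * N := by
    intro x
    have : ∀ h : X → Bool, Bval (h x) (h x) = 3 := fun h => by simp [hB]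
    simp only [this, Finset.sum_const, Finset.card_univ, nsmul_eq_mul, hN]
    ring
  have Soff : ∀ x y : X, x ≠ y → ∑ h : X → Bool, Bval (h x) (h y) = 3 / 2 * N := by
    intro x y hxy
    have e1 := flipSum Bval x y hxy
    have e2 : ∑ h : X → Bool, (Bval (h x) (h y) + Bval (h x) (!(h y))) = 3 * N := by
      have : ∀ h : X → Bool, Bval (h x) (h y) + Bval (h x) (!(h y)) = 3 := by
        intro h; cases hb : h x <;> cases hc : h y <;> simp [hB]
      simp only [this, Finset.sum_const, Finset.card_univ, nsmul_eq_mul, hN]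
      ring
    rw [Finset.sum_add_distrib, ← e1] at e2
    linarith
  -- Part 1
  have part1 : ∃ h : X → Bool, ValV w Bval h ≤ 3 * Vl + 3 / 2 * Ve := by
    have total : ∑ h : X → Bool, ValV w Bval h = N * (3 * Vl + 3 / 2 * Ve) := by
      have swap : ∑ h : X → Bool, ValV w Bval h
          = ∑ x : X, ∑ y : X, w x y * ∑ h : X → Bool, Bval (h x) (h y) := by
        unfold ValV
        rw [Finset.sum_comm]
        refine Finset.sum_congr rfl fun x _ => ?_
        rw [Finset.sum_comm]
        refine Finset.sum_congr rfl fun y _ => ?_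
        rw [Finset.mul_sum]
      rw [swap, hVl, hVe, splitAux w (3 : ℚ) (3 / 2 : ℚ), Finset.mul_sum]
      refine Finset.sum_congr rfl fun x _ => ?_
      rw [Finset.mul_sum]
      refine Finset.sum_congr rfl fun y _ => ?_
      by_cases hxy : x = y
      · subst hxy; rw [Sdiag x]; simp; ring
      · rw [Soff x y hxy]; simp [hxy]; ring
    have hsum : ∑ h : X → Bool, ValV w Bval h
        ≤ ∑ _h : X → Bool, (3 * Vl + 3 / 2 * Ve) := by
      rw [total, Finset.sum_const, Finset.card_univ, nsmul_eq_mul, ← hN]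
    obtain ⟨h, _, hh⟩ := Finset.exists_le_of_sum_le (Finset.univ_nonempty) hsum
    exact ⟨h, hh⟩
  -- Part 2
  have part2 : ∀ (p : X → Bool → ℚ) (q : X → X → Bool → Bool → ℚ), SA1feasV w p q →
      3 * Vl + 2 * Ve ≤ SA1objV w Aval q := by
    intro p q ⟨hp, hq, hp1, hm1, hm2, hdiag⟩
    rw [hVl, hVe, splitAux w (3 : ℚ) (2 : ℚ)]
    unfold SA1objV
    refine Finset.sum_le_sum fun x _ => Finset.sum_le_sum fun y _ => ?_
    by_cases hw0 : w x y = 0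
    · simp [hw0]
    · refine mul_le_mul_of_nonneg_left ?_ (hw x y)
      have m1t := hm1 x y hw0 true
      have m1f := hm1 x y hw0 false
      have s1 := hp1 x
      have q1 := hq x y true true
      have q2 := hq x y true false
      have q3 := hq x y false true
      have q4 := hq x y false false
      simp only [Fintype.sum_bool, hA] at m1t m1f s1 ⊢
      norm_num
      by_cases hxy : x = y
      · subst hxy
        have d1 := hdiag x true false (by decide)
        have d2 := hdiag x false true (by decide)
        simp only [if_true]
        linarith
      · simp only [if_neg hxy]
        linarith
  refine ⟨part1, part2, fun p q hfeas => ?_⟩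
  obtain ⟨h, hh⟩ := part1
  exact ⟨h, le_trans hh (le_trans (by linarith) (part2 p q hfeas))⟩
end

section
/- Let 𝐀 and 𝐁 be similar relational structures and suppose there exist doubly stochastic matrices P (indexed A×B transposed appropriately) and Q such that P·M^ℓ_𝐀 = M^ℓ_𝐁·Q and M^ℓ_𝐀·Qᵀ = Pᵀ·M^ℓ_𝐁 for every label ℓ. If 𝐀 and 𝐁 are graphs (single symmetric binary relation, no loops), then there is a doubly stochastic matrix P' with P'·N_𝐀 = N_𝐁·P', where N denotes adjacency matrices. In fact P itself works, via the identity N_𝐀 = U_𝐀 U_𝐀ᵀ − Z_𝐀 Z_𝐀ᵀ with U_𝐀 = (M^{(1,R)}_𝐀 + M^{(2,R)}_𝐀)/√2 and Z_𝐀 = 2M^{(1,R)}_𝐀/√2. -/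
open Matrix Finset BigOperators

/-- The constraints of a graph seen as a relational structure with a single binary
symbol: ordered pairs in the (symmetric) edge relation. -/
abbrev GCstr {V : Type*} (G : SimpleGraph V) [DecidableRel G.Adj] : Type _ :=
  {p : V × V // G.Adj p.1 p.2}

/-- The 0/1 matrix `M^{({1},R)}`: entry `(a, R(a₁,a₂))` is 1 iff `a = a₁`
(the element occurs in the first coordinate of the constraint). -/
def Mfst {V : Type*} [Fintype V] [DecidableEq V] (G : SimpleGraph V)
    [DecidableRel G.Adj] : Matrix V (GCstr G) ℝ :=
  fun a e => if e.1.1 = a then 1 else 0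

/-- The 0/1 matrix `M^{({2},R)}`: entry `(a, R(a₁,a₂))` is 1 iff `a = a₂`. -/
def Msnd {V : Type*} [Fintype V] [DecidableEq V] (G : SimpleGraph V)
    [DecidableRel G.Adj] : Matrix V (GCstr G) ℝ :=
  fun a e => if e.1.2 = a then 1 else 0

lemma adj_eq_mul {V : Type*} [Fintype V] [DecidableEq V] (G : SimpleGraph V)
    [DecidableRel G.Adj] : G.adjMatrix ℝ = Mfst G * (Msnd G)ᵀ := by
  ext a b
  simp only [Matrix.mul_apply, Mfst, Msnd, Matrix.transpose_apply,
    SimpleGraph.adjMatrix_apply]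
  by_cases h : G.Adj a b
  · rw [if_pos h]
    rw [Finset.sum_eq_single (⟨(a, b), h⟩ : GCstr G)]
    · simp
    · intro e _ he
      have : e.1.1 ≠ a ∨ e.1.2 ≠ b := by
        by_contra hc
        push_neg at hc
        exact he (Subtype.ext (Prod.ext hc.1 hc.2))
      rcases this with h' | h' <;> simp [h']
    · simp
  · rw [if_neg h]
    symm
    apply Finset.sum_eq_zero
    intro e _
    by_cases h1 : e.1.1 = a
    · by_cases h2 : e.1.2 = b
      · exact absurd (h1 ▸ h2 ▸ e.2) h
      · simp [h2]
    · simp [h1]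

/-- If `𝐀`, `𝐁` are graphs and there are doubly stochastic matrices `P`, `Q` with
`P·M^ℓ_𝐀 = M^ℓ_𝐁·Q` and `M^ℓ_𝐀·Qᵀ = Pᵀ·M^ℓ_𝐁` for every label `ℓ` (for loopless graphs
the only labels with nonzero matrices are `({1},R)` and `({2},R)`), then there is a
doubly stochastic matrix commuting with the adjacency matrices — in fact `P` itself
satisfies `P·N_𝐀 = N_𝐁·P`. -/
theorem stmt17 {A B : Type*} [Fintype A] [Fintype B] [DecidableEq A] [DecidableEq B]
    (G : SimpleGraph A) (H : SimpleGraph B) [DecidableRel G.Adj] [DecidableRel H.Adj]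
    (P : Matrix B A ℝ) (Q : Matrix (GCstr H) (GCstr G) ℝ)
    (hP : IsDoublyStochasticRect P) (hQ : IsDoublyStochasticRect Q)
    (h1 : P * Mfst G = Mfst H * Q) (h2 : P * Msnd G = Msnd H * Q)
    (h1' : Mfst G * Qᵀ = Pᵀ * Mfst H) (h2' : Msnd G * Qᵀ = Pᵀ * Msnd H) :
    (P * G.adjMatrix ℝ = H.adjMatrix ℝ * P) ∧
    ∃ P' : Matrix B A ℝ, IsDoublyStochasticRect P' ∧
      P' * G.adjMatrix ℝ = H.adjMatrix ℝ * P' := by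
  have key : P * G.adjMatrix ℝ = H.adjMatrix ℝ * P := by
    have hm : Q * (Msnd G)ᵀ = (Msnd H)ᵀ * P := by
      calc Q * (Msnd G)ᵀ = (Msnd G * Qᵀ)ᵀ := by
              rw [Matrix.transpose_mul, Matrix.transpose_transpose]
        _ = (Msnd H)ᵀ * P := by
              rw [h2', Matrix.transpose_mul, Matrix.transpose_transpose]
    rw [adj_eq_mul G, adj_eq_mul H, ← Matrix.mul_assoc, h1, Matrix.mul_assoc, hm,
      ← Matrix.mul_assoc]
  exact ⟨key, P, hP, key⟩
end
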